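/- arXiv:hep-th/9403033 — 5 statements merged into one kernel-verified Lean document; each statement's English description precedes it below -/
import Mathlib

section
/- The Cartan-subalgebra generators k^i := μ_i μ_{−i}^{−1} (1 ≤ i ≤ n) commute pairwise and commute with both the square length and the Laplacian: [k^i, k^j] = 0, [k^i, x·x] = 0 and [k^i, ∂·∂] = 0 for all i, j, where x·x := Σ_{i=1}^{n} r_i χ^i χ^{−i} q^{ρ_i − 2(n−i)} + (q^{−2n+1}/(q+1)) χ^0 χ^0 (the last term only for N odd), ∂·∂ := Σ_{i=1}^{n} r_i 𝒟_i 𝒟_{−i} q^{ρ_i − 1 − 2(n−i)} + (q^{−2n+1}/(q+1)) 𝒟_0 𝒟_0 (the last term only for N odd), and r_i := m_{−i} · Π_{j∈I_N, |j| ≤ i−1} m_j (these are the elements Λ_i^{1/2} μ_i^{−1/2} expressing x·x and ∂·∂ of Diff(R_q^N) through the decoupled generators). -/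
noncomputable section

open Finset

variable {K : Type*} [Field K] {A : Type*} [Ring A] [Algebra K A]

/-- `rho2 N i = 2 ρ_i`, the doubled ρ-vector of `so(N)` (depends only on the parity of `N`). -/
def rho2 (N : ℕ) (i : ℤ) : ℤ :=
  if 0 < i then 2 - (N % 2 : ℤ) - 2 * i
  else if i < 0 then -(2 - (N % 2 : ℤ) - 2 * (-i))
  else 0

/-- The index set `I_N ⊂ ℤ`. -/
def idx (N : ℕ) : Finset ℤ :=
  (Finset.Icc (-((N / 2 : ℕ) : ℤ)) ((N / 2 : ℕ) : ℤ)).filter fun i => i ≠ 0 ∨ N % 2 = 1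

/-- `(a ⋆ b)_j`. -/
def starProd (N : ℕ) (p : K) (a b : ℤ → A) (j : ℕ) : A :=
  (∑ l ∈ Finset.Icc (1 : ℤ) (j : ℤ), (p ^ rho2 N l) • (a (-l) * b l)) +
    (if N % 2 = 1 then (p ^ 2 / (p ^ 2 + 1)) • (a 0 * b 0) else 0)

/-- `𝒜^j(a,b)`. -/
def calA (N : ℕ) (p : K) (a b : ℤ → A) (j : ℕ) : A :=
  a (j : ℤ) * b (-(j : ℤ)) - a (-(j : ℤ)) * b (j : ℤ) -
    ((p ^ 4 - 1) * p ^ (-rho2 N (j : ℤ) - 4)) • starProd N p a b (j - 1)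

/-- `(a · b)_j`. -/
def dotProd (N : ℕ) (p : K) (a b : ℤ → A) (j : ℕ) : A :=
  if j = 0 then starProd N p a b 0
  else
    (1 + p ^ (-2 * rho2 N (j : ℤ)))⁻¹ •
      ∑ l ∈ (Finset.Icc (-(j : ℤ)) (j : ℤ)).filter (fun l => l ≠ 0 ∨ N % 2 = 1),
        (p ^ (-rho2 N l)) • (a l * b (-l))

/-- The coefficient `a_i` in the decoupled relations `𝒟_i χ^i = 1 + a_i χ^i 𝒟_i`. -/
def aPow (N : ℕ) (p : K) (i : ℤ) : K :=
  if 0 < i ∨ (N % 2 = 0 ∧ i = -1) then p ^ 4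
  else if i = 0 then p ^ 2
  else p ^ (-4 : ℤ)

/-- Upper-index decoupled derivatives: `𝒟^i = C^{ij} 𝒟_j = q^{−ρ_i} 𝒟_{−i}`. -/
def Du (N : ℕ) (p : K) (D : ℤ → A) : ℤ → A := fun i => (p ^ (-rho2 N i)) • D (-i)

/-- Ogievetsky's decoupled generators `χ^i, 𝒟_i` of `Diff(R_q^N)`, together with
pairwise commuting invertible square roots `m i` of the elements `μ_i`
(`mi i` denotes the inverse of `m i`). -/
structure Decoupled (N : ℕ) (p : K) {A : Type*} [Ring A] [Algebra K A]
    (χ D m mi : ℤ → A) : Prop where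
  comm_xx : ∀ i j : ℤ, i ≠ j → χ i * χ j = χ j * χ i
  comm_xD : ∀ i j : ℤ, i ≠ j → χ i * D j = D j * χ i
  comm_DD : ∀ i j : ℤ, i ≠ j → D i * D j = D j * D i
  Dx : ∀ i ∈ idx N, D i * χ i = 1 + aPow N p i • (χ i * D i)
  m_comm : ∀ i j : ℤ, m i * m j = m j * m i
  m_inv : ∀ i : ℤ, m i * mi i = 1 ∧ mi i * m i = 1
  m_sq_pos : ∀ i ∈ idx N, (0 < i ∨ (N % 2 = 0 ∧ i = -1)) →
      m i ^ 2 = 1 + (p ^ 4 - 1) • (χ i * D i)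
  m_sq_neg : ∀ i ∈ idx N, i < 0 → ¬(N % 2 = 0 ∧ i = -1) →
      m i ^ 2 * (1 + (p ^ (-4 : ℤ) - 1) • (χ i * D i)) = 1 ∧
      (1 + (p ^ (-4 : ℤ) - 1) • (χ i * D i)) * m i ^ 2 = 1
  m_zero : N % 2 = 1 → m 0 = 1 + (p ^ 2 - 1) • (χ 0 * D 0)
  m_x : ∀ i j : ℤ, m i * χ j = (if i = j then (p ^ 2 : K) else 1) • (χ j * m i)
  m_D : ∀ i j : ℤ, m i * D j = (if i = j then p ^ (-2 : ℤ) else 1) • (D j * m i)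

/-- The Cartan generator `k^i = μ_i μ_{−i}^{−1}`. -/
def kgen (m mi : ℤ → A) (i : ℤ) : A := m i ^ 2 * mi (-i) ^ 2

/-- The inverse Cartan generator `(k^i)^{−1} = μ_i^{−1} μ_{−i}`. -/
def kinv (m mi : ℤ → A) (i : ℤ) : A := mi i ^ 2 * m (-i) ^ 2

/-- The positive simple-root generator
`L^{1−k,k} = m_k^{−1}(q^{2ρ_k} m_{−k} m_{k−1} χ^{1−k} 𝒟^k − χ^k 𝒟^{1−k})`. -/
def Lpos (N : ℕ) (p : K) (χ D m mi : ℤ → A) (k : ℤ) : A :=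
  mi k * ((p ^ (2 * rho2 N k)) • (m (-k) * m (k - 1) * (χ (1 - k) * Du N p D k)) -
    χ k * Du N p D (1 - k))

/-- The negative simple-root generator
`L^{−k,k−1} = m_k^{−1}(q^{2ρ_k−1} m_{−k} m_{k−1} χ^{−k} 𝒟^{k−1} − χ^{k−1} 𝒟^{−k})`. -/
def Lneg (N : ℕ) (p : K) (χ D m mi : ℤ → A) (k : ℤ) : A :=
  mi k * ((p ^ (2 * rho2 N k - 2)) • (m (-k) * m (k - 1) * (χ (-k) * Du N p D (k - 1))) -
    χ (k - 1) * Du N p D (-k))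

/-- `L^{01}` (for `N` odd). -/
def L01 (N : ℕ) (p : K) (χ D m mi : ℤ → A) : A :=
  mi 1 * ((p ^ (-4 : ℤ)) • (m (-1) * (χ 0 * Du N p D 1)) - χ 1 * Du N p D 0)

/-- `L^{−1,0}` (for `N` odd). -/
def Lm10 (N : ℕ) (p : K) (χ D m mi : ℤ → A) : A :=
  mi 1 * (m (-1) * (χ (-1) * Du N p D 0) - χ 0 * Du N p D (-1))

/-- `L^{12}` (for `N` even). -/
def L12 (N : ℕ) (p : K) (χ D m mi : ℤ → A) : A :=
  mi 2 * ((p ^ (-4 : ℤ)) • (m (-2) * m (-1) * mi 1 * (χ 1 * Du N p D 2)) -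
    χ 2 * Du N p D 1)

/-- `L^{−1,2}` (for `N` even). -/
def Lm12 (N : ℕ) (p : K) (χ D m mi : ℤ → A) : A :=
  mi 2 * ((p ^ (-4 : ℤ)) • (m (-2) * m 1 * mi (-1) * (χ (-1) * Du N p D 2)) -
    χ 2 * Du N p D (-1))

/-- `L^{−2,1}` (for `N` even). -/
def Lm21 (N : ℕ) (p : K) (χ D m mi : ℤ → A) : A :=
  mi 2 * ((p ^ (-2 : ℤ)) • (m (-2) * m 1 * mi (-1) * (χ (-2) * Du N p D 1)) -
    χ 1 * Du N p D (-2))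

/-- `L^{−2,−1}` (for `N` even). -/
def Lm2m1 (N : ℕ) (p : K) (χ D m mi : ℤ → A) : A :=
  mi 2 * ((p ^ (-2 : ℤ)) • (m (-2) * m (-1) * mi 1 * (χ (-2) * Du N p D (-1))) -
    χ (-1) * Du N p D (-2))

/-- The q-bracket `[u,v]_a := u v − a (v u)`. -/
def qbr (a : K) (u v : A) : A := u * v - a • (v * u)

/-- `prodm N m k = Π_{j ∈ I_N, |j| ≤ k} m_j`. -/
def prodm (N : ℕ) (m : ℤ → A) : ℕ → A
  | 0 => if N % 2 = 1 then m 0 else 1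
  | k + 1 => m ((k : ℤ) + 1) * m (-((k : ℤ) + 1)) * prodm N m k

/-- `r_i = m_{−i} Π_{j ∈ I_N, |j| ≤ i−1} m_j` (the element `Λ_i^{1/2} μ_i^{−1/2}`). -/
def rAux (N : ℕ) (m : ℤ → A) (i : ℕ) : A := m (-(i : ℤ)) * prodm N m (i - 1)

/-- The square length `x·x` expressed through the decoupled generators. -/
def sqlenD (N : ℕ) (p : K) (χ m : ℤ → A) : A :=
  (∑ i ∈ Finset.Icc 1 (N / 2),
      (p ^ (rho2 N (i : ℤ) - 4 * (((N / 2 : ℕ) : ℤ) - (i : ℤ)))) •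
        (rAux N m i * (χ (i : ℤ) * χ (-(i : ℤ))))) +
    (if N % 2 = 1 then (p ^ (-4 * ((N / 2 : ℕ) : ℤ) + 2) / (p ^ 2 + 1)) • (χ 0 * χ 0)
      else 0)

/-- The Laplacian `∂·∂` expressed through the decoupled generators. -/
def lapD (N : ℕ) (p : K) (D m : ℤ → A) : A :=
  (∑ i ∈ Finset.Icc 1 (N / 2),
      (p ^ (rho2 N (i : ℤ) - 2 - 4 * (((N / 2 : ℕ) : ℤ) - (i : ℤ)))) •
        (rAux N m i * (D (i : ℤ) * D (-(i : ℤ))))) +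
    (if N % 2 = 1 then (p ^ (-4 * ((N / 2 : ℕ) : ℤ) + 2) / (p ^ 2 + 1)) • (D 0 * D 0)
      else 0)

private lemma inv_comm_aux {a a' b : A} (ha1 : a * a' = 1) (ha2 : a' * a = 1)
    (hc : a * b = b * a) : a' * b = b * a' := by
  have h1 : a' * (a * b) * a' = b * a' := by rw [← mul_assoc, ha2, one_mul]
  have h2 : a' * (b * a) * a' = a' * b := by rw [mul_assoc, mul_assoc, ha1, mul_one]
  rw [hc] at h1
  rw [h2] at h1
  exact h1

private lemma qc_mul_right_aux {c d : K} {u v w : A}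
    (h1 : u * v = c • (v * u)) (h2 : u * w = d • (w * u)) :
    u * (v * w) = (c * d) • ((v * w) * u) := by
  calc u * (v * w) = (u * v) * w := (mul_assoc _ _ _).symm
    _ = (c • (v * u)) * w := by rw [h1]
    _ = c • (v * (u * w)) := by rw [smul_mul_assoc, mul_assoc]
    _ = c • (v * (d • (w * u))) := by rw [h2]
    _ = (c * d) • ((v * w) * u) := by
        simp only [mul_smul_comm, smul_smul, mul_assoc]

private lemma qc_mul_left_aux {c d : K} {u w v : A}
    (h1 : u * v = c • (v * u)) (h2 : w * v = d • (v * w)) :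
    (u * w) * v = (c * d) • (v * (u * w)) := by
  calc (u * w) * v = u * (w * v) := mul_assoc _ _ _
    _ = u * (d • (v * w)) := by rw [h2]
    _ = d • ((u * v) * w) := by rw [mul_smul_comm, mul_assoc]
    _ = d • ((c • (v * u)) * w) := by rw [h1]
    _ = (c * d) • (v * (u * w)) := by
        simp only [smul_mul_assoc, smul_smul, mul_assoc, mul_comm d c]

private lemma qc_inv_aux {c : K} {u u' v : A} (hu1 : u * u' = 1) (hu2 : u' * u = 1)
    (hc : c ≠ 0) (h : u * v = c • (v * u)) : u' * v = c⁻¹ • (v * u') := by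
  have h1 : v * u' = c • (u' * v) := by
    calc v * u' = u' * (u * v) * u' := by rw [← mul_assoc, hu2, one_mul]
      _ = u' * (c • (v * u)) * u' := by rw [h]
      _ = c • (u' * v * (u * u')) := by
          simp only [mul_smul_comm, smul_mul_assoc, mul_assoc]
      _ = c • (u' * v) := by rw [hu1, mul_one]
  rw [h1, smul_smul, inv_mul_cancel₀ hc, one_smul]

private lemma comm_of_qc_aux {s : K} (hs : s ≠ 0) {u w t : A}
    (hu : u * t = s • (t * u)) (hw : w * t = s⁻¹ • (t * w)) :
    (u ^ 2 * w ^ 2) * t = t * (u ^ 2 * w ^ 2) := by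
  rw [pow_two, pow_two,
    qc_mul_left_aux (qc_mul_left_aux hu hu) (qc_mul_left_aux hw hw),
    show (s * s) * (s⁻¹ * s⁻¹) = (1 : K) by field_simp, one_smul]

/-- the Cartan generators `k^i = μ_i μ_{−i}^{−1}` commute pairwise and commute
with the square length and the Laplacian. -/
theorem cartan_commutes [CharZero K] (N : ℕ) (hN : 3 ≤ N) (p : K) (hp : p ≠ 0)
    (hpu : ∀ k : ℕ, k ≠ 0 → p ^ k ≠ 1)
    (χ D m mi : ℤ → A) (h : Decoupled N p χ D m mi)
    (i j : ℤ) (hi1 : 1 ≤ i) (hi2 : i ≤ (N / 2 : ℕ)) (hj1 : 1 ≤ j) (hj2 : j ≤ (N / 2 : ℕ)) :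
    kgen m mi i * kgen m mi j = kgen m mi j * kgen m mi i ∧
    kgen m mi i * sqlenD N p χ m = sqlenD N p χ m * kgen m mi i ∧
    kgen m mi i * lapD N p D m = lapD N p D m * kgen m mi i := by
  -- basic commutations among m and mi
  have hmi_m : ∀ a b : ℤ, mi a * m b = m b * mi a := fun a b =>
    inv_comm_aux (h.m_inv a).1 (h.m_inv a).2 (h.m_comm a b)
  have hmi_mi : ∀ a b : ℤ, mi a * mi b = mi b * mi a := fun a b =>
    inv_comm_aux (h.m_inv a).1 (h.m_inv a).2 (hmi_m b a).symm
  have hk_m : ∀ a b : ℤ, Commute (kgen m mi a) (m b) := fun a b =>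
    Commute.mul_left (Commute.pow_left (h.m_comm a b) 2)
      (Commute.pow_left (hmi_m (-a) b) 2)
  have hk_mi : ∀ a b : ℤ, Commute (kgen m mi a) (mi b) := fun a b =>
    Commute.mul_left (Commute.pow_left ((hmi_m b a).symm) 2)
      (Commute.pow_left (hmi_mi (-a) b) 2)
  have hk_prodm : ∀ a : ℤ, ∀ k : ℕ, Commute (kgen m mi a) (prodm N m k) := by
    intro a k
    induction k with
    | zero =>
        rw [prodm]
        split_ifs
        · exact hk_m a 0
        · exact Commute.one_right _
    | succ k ih =>
        rw [prodm]
        exact ((hk_m a _).mul_right (hk_m a _)).mul_right ih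
  have hk_r : ∀ a : ℤ, ∀ k : ℕ, Commute (kgen m mi a) (rAux N m k) := fun a k =>
    (hk_m a _).mul_right (hk_prodm a _)
  -- kgen commutes with the pairs χ_a χ_{-a} and D_a D_{-a}
  have hx : ∀ a : ℤ, 0 ≤ a → Commute (kgen m mi i) (χ a * χ (-a)) := by
    intro a ha
    set s : K := if i = a then p ^ 2 else 1 with hs
    have hsne : s ≠ 0 := by
      rw [hs]; split_ifs
      · exact pow_ne_zero _ hp
      · exact one_ne_zero
    have h1 : m i * (χ a * χ (-a)) = s • ((χ a * χ (-a)) * m i) := by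
      have e1 := h.m_x i a
      have e2 := h.m_x i (-a)
      rw [if_neg (by omega : ¬ i = -a)] at e2
      have := qc_mul_right_aux e1 e2
      rwa [mul_one] at this
    have h2 : m (-i) * (χ a * χ (-a)) = s • ((χ a * χ (-a)) * m (-i)) := by
      have e1 := h.m_x (-i) a
      rw [if_neg (by omega : ¬ -i = a)] at e1
      have e2 : m (-i) * χ (-a) = s • (χ (-a) * m (-i)) := by
        rw [hs]
        simpa only [neg_inj] using h.m_x (-i) (-a)
      have := qc_mul_right_aux e1 e2
      rwa [one_mul] at this
    have h3 : mi (-i) * (χ a * χ (-a)) = s⁻¹ • ((χ a * χ (-a)) * mi (-i)) :=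
      qc_inv_aux (h.m_inv (-i)).1 (h.m_inv (-i)).2 hsne h2
    exact comm_of_qc_aux hsne h1 h3
  have hD : ∀ a : ℤ, 0 ≤ a → Commute (kgen m mi i) (D a * D (-a)) := by
    intro a ha
    set s : K := if i = a then p ^ (-2 : ℤ) else 1 with hs
    have hsne : s ≠ 0 := by
      rw [hs]; split_ifs
      · exact zpow_ne_zero _ hp
      · exact one_ne_zero
    have h1 : m i * (D a * D (-a)) = s • ((D a * D (-a)) * m i) := by
      have e1 := h.m_D i a
      have e2 := h.m_D i (-a)
      rw [if_neg (by omega : ¬ i = -a)] at e2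
      have := qc_mul_right_aux e1 e2
      rwa [mul_one] at this
    have h2 : m (-i) * (D a * D (-a)) = s • ((D a * D (-a)) * m (-i)) := by
      have e1 := h.m_D (-i) a
      rw [if_neg (by omega : ¬ -i = a)] at e1
      have e2 : m (-i) * D (-a) = s • (D (-a) * m (-i)) := by
        rw [hs]
        simpa only [neg_inj] using h.m_D (-i) (-a)
      have := qc_mul_right_aux e1 e2
      rwa [one_mul] at this
    have h3 : mi (-i) * (D a * D (-a)) = s⁻¹ • ((D a * D (-a)) * mi (-i)) :=
      qc_inv_aux (h.m_inv (-i)).1 (h.m_inv (-i)).2 hsne h2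
    exact comm_of_qc_aux hsne h1 h3
  refine ⟨?_, ?_, ?_⟩
  · exact (((hk_m i j).pow_right 2).mul_right ((hk_mi i (-j)).pow_right 2)).eq
  · unfold sqlenD
    refine (Commute.add_right (Commute.sum_right _ _ _ fun a _ => ?_) ?_).eq
    · exact ((hk_r i a).mul_right (hx (a : ℤ) (Int.ofNat_nonneg a))).smul_right _
    · split_ifs
      · have := (hx 0 le_rfl).smul_right
          (p ^ (-4 * ((N / 2 : ℕ) : ℤ) + 2) / (p ^ 2 + 1))
        rwa [neg_zero] at this
      · exact Commute.zero_right _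
  · unfold lapD
    refine (Commute.add_right (Commute.sum_right _ _ _ fun a _ => ?_) ?_).eq
    · exact ((hk_r i a).mul_right (hD (a : ℤ) (Int.ofNat_nonneg a))).smul_right _
    · split_ifs
      · have := (hD 0 le_rfl).smul_right
          (p ^ (-4 * ((N / 2 : ℕ) : ℤ) + 2) / (p ^ 2 + 1))
        rwa [neg_zero] at this
      · exact Commute.zero_right _
end
end

section
/- For every h with |h| < n one has the q-commutation relations L^{hn} D_n − q D_n L^{hn} = ∂^h and L^{−n,h} X^n − q^{−1} X^n L^{−n,h} = −q^{ρ_n} x^h, where ∂^h := q^{−ρ_h} m D_{−h} and x^h := m X^h are the covariant derivative and coordinate of Diff(R_q^N) with index h. -/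
noncomputable section

open Finset

variable {K : Type*} [Field K] {A : Type*} [Ring A] [Algebra K A]

/-- Upper-index derivatives: `∂^i = C^{ij} ∂_j = q^{-ρ_i} ∂_{-i}`. -/
def du (N : ℕ) (p : K) (d : ℤ → A) : ℤ → A := fun i => (p ^ (-rho2 N i)) • d (-i)

/-- `Σ_{i ∈ I_N} x^i ∂_i`. -/
def xdel (N : ℕ) (x d : ℤ → A) : A := ∑ i ∈ idx N, x i * d i

/-- The square length `x·x = (x·x)_n`. -/
def sqlen (N : ℕ) (p : K) (x : ℤ → A) : A := dotProd N p x x (N / 2)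

/-- The Laplacian `∂·∂ = (∂·∂)_n`. -/
def lap (N : ℕ) (p : K) (d : ℤ → A) : A :=
  dotProd N p (du N p d) (du N p d) (N / 2)

/-- The defining relations of `Diff(R_q^N)` for the generators `x^i` and `∂_i`. -/
structure IsDiff (N : ℕ) (p : K) {A : Type*} [Ring A] [Algebra K A] (x d : ℤ → A) : Prop where
  xx : ∀ i j : ℤ, i ∈ idx N → j ∈ idx N → i < j → i ≠ -j →
      x i * x j = p ^ 2 • (x j * x i)
  dd : ∀ i j : ℤ, i ∈ idx N → j ∈ idx N → i < j → i ≠ -j →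
      du N p d i * du N p d j = p ^ 2 • (du N p d j * du N p d i)
  Axx : ∀ i : ℕ, 1 ≤ i → i ≤ N / 2 → calA N p x x i = 0
  Add : ∀ i : ℕ, 1 ≤ i → i ≤ N / 2 → calA N p (du N p d) (du N p d) i = 0
  dx_low : ∀ j k : ℤ, j ∈ idx N → k ∈ idx N → j < -k → j ≠ k →
      d k * x j = p ^ 2 • (x j * d k) -
        ((p ^ 4 - 1) * p ^ (-rho2 N j - rho2 N k)) • (x (-k) * d (-j))
  dx_high : ∀ j k : ℤ, j ∈ idx N → k ∈ idx N → -k < j → j ≠ k →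
      d k * x j = p ^ 2 • (x j * d k)
  dx_opp : ∀ k : ℤ, k ∈ idx N → k ≠ 0 → d (-k) * x k = x k * d (-k)
  dx_diag_pos : ∀ i : ℤ, i ∈ idx N → 0 < i →
      d i * x i = 1 + p ^ 4 • (x i * d i) +
        (p ^ 4 - 1) • ∑ j ∈ (idx N).filter (fun j => i < j), x j * d j
  dx_diag_neg : ∀ i : ℤ, i ∈ idx N → i < 0 →
      d i * x i = 1 + p ^ 4 • (x i * d i) +
        (p ^ 4 - 1) • (∑ j ∈ (idx N).filter (fun j => i < j), x j * d j) -
        (p ^ (-2 * rho2 N i) * (p ^ 4 - 1)) • (x (-i) * d (-i))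
  dx_diag_zero : N % 2 = 1 →
      d 0 * x 0 = 1 + p ^ 2 • (x 0 * d 0) +
        (p ^ 4 - 1) • ∑ j ∈ (idx N).filter (fun j => 0 < j), x j * d j

/-- The dilatation operator `Λ_n`. -/
def Lam (N : ℕ) (p : K) (x d : ℤ → A) : A :=
  1 + (p ^ 4 - 1) • xdel N x d +
    (p ^ (2 * (N : ℤ) - 4) * (p ^ 4 - 1) ^ 2) • (sqlen N p x * lap N p d)

/-- The operator `𝓑_n = 1 + q^{N-2}(q²-1)(x·∂)_n`. -/
def Bop (N : ℕ) (p : K) (x d : ℤ → A) : A :=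
  1 + (p ^ (2 * (N : ℤ) - 4) * (p ^ 4 - 1)) • dotProd N p x (du N p d) (N / 2)

/-- The partially decoupled generators of `Diff(R_q^N)`: `X^i, D_i` with `|i| ≤ n−1`
satisfy the `Diff(R_q^{N−2})` relations, `X^{±n}, D_{±n}` are decoupled from them,
`mum = μ_{−n}`, `m = μ_n^{1/2}`, `lam = Λ_n^{1/2}` (with inverses `mi`, `lami`). -/
structure SplitDiff (N : ℕ) (p : K) {A : Type*} [Ring A] [Algebra K A]
    (X D : ℤ → A) (mum m mi lam lami : A) : Prop where
  base : IsDiff (N - 2) p X D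
  comm_Xn : ∀ i : ℤ, i ∈ idx (N - 2) →
      X ((N / 2 : ℕ) : ℤ) * X i = X i * X ((N / 2 : ℕ) : ℤ) ∧
      X (-((N / 2 : ℕ) : ℤ)) * X i = X i * X (-((N / 2 : ℕ) : ℤ)) ∧
      X ((N / 2 : ℕ) : ℤ) * D i = D i * X ((N / 2 : ℕ) : ℤ) ∧
      X (-((N / 2 : ℕ) : ℤ)) * D i = D i * X (-((N / 2 : ℕ) : ℤ))
  comm_Dn : ∀ i : ℤ, i ∈ idx (N - 2) →
      D ((N / 2 : ℕ) : ℤ) * X i = X i * D ((N / 2 : ℕ) : ℤ) ∧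
      D (-((N / 2 : ℕ) : ℤ)) * X i = X i * D (-((N / 2 : ℕ) : ℤ)) ∧
      D ((N / 2 : ℕ) : ℤ) * D i = D i * D ((N / 2 : ℕ) : ℤ) ∧
      D (-((N / 2 : ℕ) : ℤ)) * D i = D i * D (-((N / 2 : ℕ) : ℤ))
  comm_nn :
      X ((N / 2 : ℕ) : ℤ) * X (-((N / 2 : ℕ) : ℤ)) =
        X (-((N / 2 : ℕ) : ℤ)) * X ((N / 2 : ℕ) : ℤ) ∧
      D ((N / 2 : ℕ) : ℤ) * D (-((N / 2 : ℕ) : ℤ)) =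
        D (-((N / 2 : ℕ) : ℤ)) * D ((N / 2 : ℕ) : ℤ) ∧
      D ((N / 2 : ℕ) : ℤ) * X (-((N / 2 : ℕ) : ℤ)) =
        X (-((N / 2 : ℕ) : ℤ)) * D ((N / 2 : ℕ) : ℤ) ∧
      D (-((N / 2 : ℕ) : ℤ)) * X ((N / 2 : ℕ) : ℤ) =
        X ((N / 2 : ℕ) : ℤ) * D (-((N / 2 : ℕ) : ℤ))
  DX_pos : D ((N / 2 : ℕ) : ℤ) * X ((N / 2 : ℕ) : ℤ) =
      1 + p ^ 4 • (X ((N / 2 : ℕ) : ℤ) * D ((N / 2 : ℕ) : ℤ))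
  DX_neg : D (-((N / 2 : ℕ) : ℤ)) * X (-((N / 2 : ℕ) : ℤ)) =
      1 + (p ^ (-4 : ℤ)) • (X (-((N / 2 : ℕ) : ℤ)) * D (-((N / 2 : ℕ) : ℤ)))
  mum_inv :
      mum * (1 + (p ^ (-4 : ℤ) - 1) • (X (-((N / 2 : ℕ) : ℤ)) * D (-((N / 2 : ℕ) : ℤ)))) = 1 ∧
      (1 + (p ^ (-4 : ℤ) - 1) • (X (-((N / 2 : ℕ) : ℤ)) * D (-((N / 2 : ℕ) : ℤ)))) * mum = 1
  m_sq : m ^ 2 = 1 + (p ^ 4 - 1) • (X ((N / 2 : ℕ) : ℤ) * D ((N / 2 : ℕ) : ℤ))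
  lam_sq : lam ^ 2 =
      Lam (N - 2) p X D *
        ((1 + (p ^ 4 - 1) • (X ((N / 2 : ℕ) : ℤ) * D ((N / 2 : ℕ) : ℤ))) * mum)
  m_inv : m * mi = 1 ∧ mi * m = 1
  lam_inv : lam * lami = 1 ∧ lami * lam = 1
  m_lam : m * lam = lam * m
  m_X : ∀ i : ℤ, m * X i = (if i = ((N / 2 : ℕ) : ℤ) then (p ^ 2 : K) else 1) • (X i * m)
  m_D : ∀ i : ℤ, m * D i = (if i = ((N / 2 : ℕ) : ℤ) then p ^ (-2 : ℤ) else 1) • (D i * m)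
  lam_X : ∀ i : ℤ, i ∈ idx N → lam * X i = p ^ 2 • (X i * lam)
  lam_D : ∀ i : ℤ, i ∈ idx N → lam * D i = (p ^ (-2 : ℤ)) • (D i * lam)

/-- The generator `L^{ln} = q^{−2} Λ_n^{−1/2} μ_{−n} [D^l,(X·X)_{n−1}] D^n − μ_n^{−1/2} X^n D^l`. -/
def Lln (N : ℕ) (p : K) (X D : ℤ → A) (mum mi lami : A) (l : ℤ) : A :=
  (p ^ (-4 : ℤ)) •
      (lami * (mum *
        ((du N p D l * dotProd N p X X (N / 2 - 1) -
            dotProd N p X X (N / 2 - 1) * du N p D l) * du N p D ((N / 2 : ℕ) : ℤ)))) -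
    mi * (X ((N / 2 : ℕ) : ℤ) * du N p D l)

/-- The generator
`L^{−n,l} = q^{−1} Λ_n^{−1/2} μ_{−n} X^{−n} [(D·D)_{n−1},X^l] − μ_n^{−1/2} X^l D^{−n}`. -/
def Lmnl (N : ℕ) (p : K) (X D : ℤ → A) (mum mi lami : A) (l : ℤ) : A :=
  (p ^ (-2 : ℤ)) •
      (lami * (mum * (X (-((N / 2 : ℕ) : ℤ)) *
        (dotProd N p (du N p D) (du N p D) (N / 2 - 1) * X l -
          X l * dotProd N p (du N p D) (du N p D) (N / 2 - 1))))) -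
    mi * (X l * du N p D (-((N / 2 : ℕ) : ℤ)))


/-! ### Auxiliary lemmas -/

lemma conj_comm' {c : K} {z zi a : A} (h1 : z * zi = 1) (h2 : zi * z = 1)
    (hza : z * a = c • (a * z)) : a * zi = c • (zi * a) := by
  calc a * zi = zi * z * a * zi := by rw [h2, one_mul]
    _ = zi * (z * a) * zi := by rw [mul_assoc zi z a]
    _ = zi * (c • (a * z)) * zi := by rw [hza]
    _ = c • (zi * (a * z) * zi) := by rw [mul_smul_comm, smul_mul_assoc]
    _ = c • (zi * a) := by rw [← mul_assoc zi a z, mul_assoc (zi * a) z zi, h1, mul_one]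

lemma commute_inv' {z w wi : A} (h1 : w * wi = 1) (h2 : wi * w = 1)
    (hzw : Commute z w) : Commute z wi := by
  have key : wi * z = z * wi := by
    calc wi * z = wi * z * (w * wi) := by rw [h1, mul_one]
      _ = wi * (z * w) * wi := by rw [← mul_assoc, mul_assoc wi z w]
      _ = wi * (w * z) * wi := by rw [hzw.eq]
      _ = wi * w * (z * wi) := by rw [← mul_assoc wi w z, mul_assoc (wi * w) z wi]
      _ = z * wi := by rw [h2, one_mul]
  exact key.symm

lemma commute_dotProd' {N : ℕ} {p : K} {a b : ℤ → A} {z : A} (j : ℕ)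
    (hcom : ∀ l : ℤ, -(j:ℤ) ≤ l → l ≤ (j:ℤ) → (l ≠ 0 ∨ N % 2 = 1) →
      Commute z (a l) ∧ Commute z (b l)) :
    Commute z (dotProd N p a b j) := by
  unfold dotProd
  split_ifs with hj
  · unfold starProd
    apply Commute.add_right
    · apply Commute.sum_right
      intro l hl
      rw [Finset.mem_Icc] at hl
      exact absurd hl (by push_cast; omega)
    · split_ifs with hpar
      · exact (((hcom 0 (by omega) (by omega) (Or.inr hpar)).1).mul_right
          (hcom 0 (by omega) (by omega) (Or.inr hpar)).2).smul_right _
      · exact Commute.zero_right z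
  · apply Commute.smul_right
    apply Commute.sum_right
    intro l hl
    simp only [Finset.mem_filter, Finset.mem_Icc] at hl
    exact (((hcom l hl.1.1 hl.1.2 hl.2).1).mul_right
      (hcom (-l) (by omega) (by omega) (by omega)).2).smul_right _

lemma moveD' (Dn lami mum W : A) {c : K}
    (h1 : Dn * lami = c • (lami * Dn))
    (h2 : Commute Dn mum) (h3 : Commute Dn W) :
    Dn * (lami * (mum * W)) = c • ((lami * (mum * W)) * Dn) := by
  calc Dn * (lami * (mum * W)) = (Dn * lami) * (mum * W) := by rw [mul_assoc]
    _ = c • (lami * (Dn * (mum * W))) := by rw [h1, smul_mul_assoc, mul_assoc]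
    _ = c • (lami * ((mum * W) * Dn)) := by rw [(h2.mul_right h3).eq]
    _ = c • ((lami * (mum * W)) * Dn) := by rw [← mul_assoc lami (mum * W) Dn]

lemma partA' {p : K} (hp : p ≠ 0) (Dn Xn Dh Dmh E mi m : A) (rh : K)
    (hE : Dn * E = p ^ (-2:ℤ) • (E * Dn))
    (hDnDh : Dn * Dh = Dh * Dn)
    (hDnmi : Dn * mi = p ^ (-2:ℤ) • (mi * Dn))
    (hDX : Dn * Xn = 1 + p ^ 4 • (Xn * Dn))
    (hmsq : m ^ 2 = 1 + (p ^ 4 - 1) • (Xn * Dn))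
    (hmi : mi * m = 1)
    (hDh : Dh = rh • Dmh) :
    (p ^ (-4:ℤ) • E - mi * (Xn * Dh)) * Dn -
        p ^ 2 • (Dn * (p ^ (-4:ℤ) • E - mi * (Xn * Dh))) =
      rh • (m * Dmh) := by
  have hs1 : (p:K) ^ 2 * p ^ (-4:ℤ) * p ^ (-2:ℤ) = p ^ (-4:ℤ) := by
    rw [← zpow_natCast p 2, ← zpow_add₀ hp, ← zpow_add₀ hp]; norm_num
  have hs2 : (p:K) ^ 2 * p ^ (-2:ℤ) = 1 := by
    rw [← zpow_natCast p 2, ← zpow_add₀ hp]; norm_num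
  have e1 : (p ^ (-4:ℤ) • E - mi * (Xn * Dh)) * Dn
      = p ^ (-4:ℤ) • (E * Dn) - mi * (Xn * (Dn * Dh)) := by
    rw [sub_mul, smul_mul_assoc, mul_assoc mi, mul_assoc Xn, ← hDnDh]
  have e2 : p ^ 2 • (Dn * (p ^ (-4:ℤ) • E - mi * (Xn * Dh)))
      = p ^ (-4:ℤ) • (E * Dn) - (mi * Dh + p ^ 4 • (mi * (Xn * (Dn * Dh)))) := by
    rw [mul_sub, mul_smul_comm, hE, smul_sub]
    congr 1
    · rw [smul_smul, smul_smul, hs1]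
    · rw [← mul_assoc Dn mi, hDnmi, smul_mul_assoc, smul_smul, hs2, one_smul,
        mul_assoc mi, ← mul_assoc Dn Xn, hDX, add_mul, one_mul, smul_mul_assoc,
        mul_assoc Xn Dn Dh, mul_add, mul_smul_comm]
  have hm : m = mi * m ^ 2 := by rw [pow_two, ← mul_assoc, hmi, one_mul]
  have eR : rh • (m * Dmh) = mi * Dh + (p ^ 4 - 1) • (mi * (Xn * (Dn * Dh))) := by
    calc rh • (m * Dmh) = m * Dh := by rw [hDh, mul_smul_comm]
      _ = mi * (m ^ 2 * Dh) := by conv_lhs => rw [hm, mul_assoc]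
      _ = mi * ((1 + (p ^ 4 - 1) • (Xn * Dn)) * Dh) := by rw [hmsq]
      _ = mi * Dh + (p ^ 4 - 1) • (mi * (Xn * (Dn * Dh))) := by
          rw [add_mul, one_mul, smul_mul_assoc, mul_assoc Xn Dn Dh, mul_add, mul_smul_comm]
  rw [e1, e2, eR]
  module

lemma partB' {p : K} (hp : p ≠ 0) (Xn Dn Xh Dumn E mi m : A) (rh : K)
    (hE : Xn * E = p ^ 2 • (E * Xn))
    (hXnXh : Xn * Xh = Xh * Xn)
    (hDnXh : Dn * Xh = Xh * Dn)
    (hXnmi : Xn * mi = p ^ 2 • (mi * Xn))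
    (hDX : Dn * Xn = 1 + p ^ 4 • (Xn * Dn))
    (hmsq : m ^ 2 = 1 + (p ^ 4 - 1) • (Xn * Dn))
    (hmi : mi * m = 1)
    (hDumn : Dumn = rh • Dn) :
    (p ^ (-2:ℤ) • E - mi * (Xh * Dumn)) * Xn -
        p ^ (-2:ℤ) • (Xn * (p ^ (-2:ℤ) • E - mi * (Xh * Dumn))) =
      -(rh • (m * Xh)) := by
  have hs2 : (p:K) ^ (-2:ℤ) * p ^ 2 = 1 := by
    rw [← zpow_natCast p 2, ← zpow_add₀ hp]; norm_num
  have hs3 : (p:K) ^ (-2:ℤ) * p ^ (-2:ℤ) * p ^ 2 = p ^ (-2:ℤ) := by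
    rw [mul_assoc, hs2, mul_one]
  have hXhXnDn : Xh * (Xn * Dn) = Xn * (Xh * Dn) := by
    rw [← mul_assoc Xh Xn Dn, ← hXnXh, mul_assoc]
  have e1 : (p ^ (-2:ℤ) • E - mi * (Xh * Dumn)) * Xn
      = p ^ (-2:ℤ) • (E * Xn) -
          (rh • (mi * Xh) + (rh * p ^ 4) • (mi * (Xn * (Xh * Dn)))) := by
    rw [sub_mul, smul_mul_assoc]
    congr 1
    rw [hDumn, mul_smul_comm, mul_smul_comm, smul_mul_assoc,
      mul_assoc mi, mul_assoc Xh, hDX, mul_add, mul_one, mul_smul_comm, hXhXnDn,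
      mul_add, mul_smul_comm, smul_add, smul_smul]
  have e2 : p ^ (-2:ℤ) • (Xn * (p ^ (-2:ℤ) • E - mi * (Xh * Dumn)))
      = p ^ (-2:ℤ) • (E * Xn) - rh • (mi * (Xn * (Xh * Dn))) := by
    rw [mul_sub, mul_smul_comm, hE, smul_sub]
    congr 1
    · rw [smul_smul, smul_smul, hs3]
    · rw [← mul_assoc Xn mi, hXnmi, smul_mul_assoc, smul_smul, hs2, one_smul,
        mul_assoc mi, hDumn, mul_smul_comm, mul_smul_comm, mul_smul_comm]
  have hm : m = mi * m ^ 2 := by rw [pow_two, ← mul_assoc, hmi, one_mul]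
  have eR : rh • (m * Xh)
      = rh • (mi * Xh) + (rh * (p ^ 4 - 1)) • (mi * (Xn * (Xh * Dn))) := by
    have key : m * Xh = mi * Xh + (p ^ 4 - 1) • (mi * (Xn * (Xh * Dn))) := by
      calc m * Xh = mi * (m ^ 2 * Xh) := by conv_lhs => rw [hm, mul_assoc]
        _ = mi * ((1 + (p ^ 4 - 1) • (Xn * Dn)) * Xh) := by rw [hmsq]
        _ = mi * Xh + (p ^ 4 - 1) • (mi * (Xn * (Xh * Dn))) := by
            rw [add_mul, one_mul, smul_mul_assoc, mul_assoc Xn Dn Xh, hDnXh,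
              mul_add, mul_smul_comm]
    rw [key, smul_add, smul_smul]
  rw [e1, e2, eR]
  module

/-- `[L^{hn}, ∂_n]_q = ∂^h` and `[L^{−n,h}, x^n]_{q^{−1}} = −q^{ρ_n} x^h`
for `|h| < n`. -/
theorem Lln_Dn_and_Lmnl_Xn [CharZero K] (N : ℕ) (hN : 3 ≤ N) (p : K) (hp : p ≠ 0)
    (hpu : ∀ k : ℕ, k ≠ 0 → p ^ k ≠ 1)
    (X D : ℤ → A) (mum m mi lam lami : A) (h : SplitDiff N p X D mum m mi lam lami)
    (hIdx : ℤ) (hh : hIdx ∈ idx N) (hh2 : |hIdx| < ((N / 2 : ℕ) : ℤ)) :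
    Lln N p X D mum mi lami hIdx * D ((N / 2 : ℕ) : ℤ) -
        p ^ 2 • (D ((N / 2 : ℕ) : ℤ) * Lln N p X D mum mi lami hIdx) =
      (p ^ (-rho2 N hIdx)) • (m * D (-hIdx)) ∧
    Lmnl N p X D mum mi lami hIdx * X ((N / 2 : ℕ) : ℤ) -
        (p ^ (-2 : ℤ)) • (X ((N / 2 : ℕ) : ℤ) * Lmnl N p X D mum mi lami hIdx) =
      -((p ^ rho2 N ((N / 2 : ℕ) : ℤ)) • (m * X hIdx)) := by
  have hn1 : 1 ≤ N / 2 := by omega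
  have hmmi := h.m_inv
  have hll := h.lam_inv
  have hnmem : ((N / 2 : ℕ) : ℤ) ∈ idx N := by
    simp only [idx, Finset.mem_filter, Finset.mem_Icc]
    omega
  have habs := abs_lt.mp hh2
  have hhc := hh
  simp only [idx, Finset.mem_filter, Finset.mem_Icc] at hhc
  have hlow : ∀ l : ℤ, -(((N / 2 : ℕ) : ℤ) - 1) ≤ l → l ≤ ((N / 2 : ℕ) : ℤ) - 1 →
      (l ≠ 0 ∨ N % 2 = 1) → l ∈ idx (N - 2) := by
    intro l h1 h2 h3
    simp only [idx, Finset.mem_filter, Finset.mem_Icc]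
    omega
  have hhm : hIdx ∈ idx (N - 2) := hlow _ (by omega) (by omega) hhc.2
  have hhm' : -hIdx ∈ idx (N - 2) := hlow _ (by omega) (by omega) (by omega)
  constructor
  · -- Part 1
    simp only [Lln]
    have cDnS : Commute (D ((N / 2 : ℕ) : ℤ)) (dotProd N p X X (N / 2 - 1)) := by
      apply commute_dotProd'
      intro l hl1 hl2 hl3
      have hm1 := hlow l (by omega) (by omega) hl3
      exact ⟨(h.comm_Dn l hm1).1, (h.comm_Dn l hm1).1⟩
    have cDnDh : Commute (D ((N / 2 : ℕ) : ℤ)) (du N p D hIdx) :=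
      Commute.smul_right ((h.comm_Dn (-hIdx) hhm').2.2.1) _
    have cDnDun : Commute (D ((N / 2 : ℕ) : ℤ)) (du N p D ((N / 2 : ℕ) : ℤ)) :=
      Commute.smul_right h.comm_nn.2.1 _
    have cDnmum : Commute (D ((N / 2 : ℕ) : ℤ)) mum := by
      apply commute_inv' h.mum_inv.2 h.mum_inv.1
      have c1 : Commute (D ((N / 2 : ℕ) : ℤ)) (X (-((N / 2 : ℕ) : ℤ))) := h.comm_nn.2.2.1
      have c2 : Commute (D ((N / 2 : ℕ) : ℤ)) (D (-((N / 2 : ℕ) : ℤ))) := h.comm_nn.2.1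
      exact (Commute.one_right _).add_right (Commute.smul_right (c1.mul_right c2) _)
    have cDnlami : D ((N / 2 : ℕ) : ℤ) * lami =
        p ^ (-2:ℤ) • (lami * D ((N / 2 : ℕ) : ℤ)) :=
      conj_comm' hll.1 hll.2 (h.lam_D _ hnmem)
    have cDnmi : D ((N / 2 : ℕ) : ℤ) * mi =
        p ^ (-2:ℤ) • (mi * D ((N / 2 : ℕ) : ℤ)) :=
      conj_comm' hmmi.1 hmmi.2 (by simpa using h.m_D ((N / 2 : ℕ) : ℤ))
    have cCC : Commute (D ((N / 2 : ℕ) : ℤ))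
        (du N p D hIdx * dotProd N p X X (N / 2 - 1) -
          dotProd N p X X (N / 2 - 1) * du N p D hIdx) :=
      (cDnDh.mul_right cDnS).sub_right (cDnS.mul_right cDnDh)
    exact partA' hp (D ((N / 2 : ℕ) : ℤ)) (X ((N / 2 : ℕ) : ℤ)) (du N p D hIdx)
      (D (-hIdx)) _ mi m (p ^ (-rho2 N hIdx))
      (moveD' _ lami mum _ cDnlami cDnmum (cCC.mul_right cDnDun))
      cDnDh.eq cDnmi h.DX_pos h.m_sq hmmi.2 rfl
  · -- Part 2
    simp only [Lmnl]
    have cXnT : Commute (X ((N / 2 : ℕ) : ℤ))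
        (dotProd N p (du N p D) (du N p D) (N / 2 - 1)) := by
      apply commute_dotProd'
      intro l hl1 hl2 hl3
      have hm1 : (-l) ∈ idx (N - 2) := hlow _ (by omega) (by omega) (by omega)
      have hc : Commute (X ((N / 2 : ℕ) : ℤ)) (du N p D l) :=
        Commute.smul_right ((h.comm_Xn (-l) hm1).2.2.1) _
      exact ⟨hc, hc⟩
    have cXnXh : Commute (X ((N / 2 : ℕ) : ℤ)) (X hIdx) := (h.comm_Xn hIdx hhm).1
    have cDnXh : D ((N / 2 : ℕ) : ℤ) * X hIdx = X hIdx * D ((N / 2 : ℕ) : ℤ) :=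
      (h.comm_Dn hIdx hhm).1
    have cXnXm : Commute (X ((N / 2 : ℕ) : ℤ)) (X (-((N / 2 : ℕ) : ℤ))) := h.comm_nn.1
    have cXnDm : Commute (X ((N / 2 : ℕ) : ℤ)) (D (-((N / 2 : ℕ) : ℤ))) :=
      (h.comm_nn.2.2.2).symm
    have cXnmum : Commute (X ((N / 2 : ℕ) : ℤ)) mum := by
      apply commute_inv' h.mum_inv.2 h.mum_inv.1
      exact (Commute.one_right _).add_right
        (Commute.smul_right (cXnXm.mul_right cXnDm) _)
    have cXnlami : X ((N / 2 : ℕ) : ℤ) * lami =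
        p ^ 2 • (lami * X ((N / 2 : ℕ) : ℤ)) :=
      conj_comm' hll.1 hll.2 (h.lam_X _ hnmem)
    have cXnmi : X ((N / 2 : ℕ) : ℤ) * mi = p ^ 2 • (mi * X ((N / 2 : ℕ) : ℤ)) :=
      conj_comm' hmmi.1 hmmi.2 (by simpa using h.m_X ((N / 2 : ℕ) : ℤ))
    have cCC : Commute (X ((N / 2 : ℕ) : ℤ))
        (dotProd N p (du N p D) (du N p D) (N / 2 - 1) * X hIdx -
          X hIdx * dotProd N p (du N p D) (du N p D) (N / 2 - 1)) :=
      (cXnT.mul_right cXnXh).sub_right (cXnXh.mul_right cXnT)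
    have hDumn : du N p D (-((N / 2 : ℕ) : ℤ)) =
        (p ^ (rho2 N ((N / 2 : ℕ) : ℤ))) • D ((N / 2 : ℕ) : ℤ) := by
      have hexp : -rho2 N (-((N / 2 : ℕ) : ℤ)) = rho2 N ((N / 2 : ℕ) : ℤ) := by
        simp only [rho2]; split_ifs <;> omega
      simp only [du, neg_neg, hexp]
    exact partB' hp (X ((N / 2 : ℕ) : ℤ)) (D ((N / 2 : ℕ) : ℤ)) (X hIdx)
      (du N p D (-((N / 2 : ℕ) : ℤ))) _ mi m (p ^ (rho2 N ((N / 2 : ℕ) : ℤ)))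
      (moveD' _ lami mum _ cXnlami cXnmum (cXnXm.mul_right cCC))
      cXnXh.eq cDnXh cXnmi h.DX_pos h.m_sq hmmi.2 hDumn
end
end

section
/- Writing [u,v]_a := uv − a·vu, for every 1 ≤ i ≤ n the following hold. For each generic index k (2 ≤ k ≤ n if N is odd; 3 ≤ k ≤ n if N is even): [k^i, L^{1−k,k}]_{q²} = 0 if i = k, [k^i, L^{1−k,k}]_{q^{−2}} = 0 if i = k−1, and [k^i, L^{1−k,k}] = 0 otherwise; [k^i, L^{−k,k−1}]_{q^{−2}} = 0 if i = k, [k^i, L^{−k,k−1}]_{q²} = 0 if i = k−1, and [k^i, L^{−k,k−1}] = 0 otherwise. If N is odd: [k^1, L^{01}]_{q²} = 0, [k^1, L^{−1,0}]_{q^{−2}} = 0, and [k^i, L^{01}] = 0 = [k^i, L^{−1,0}] for i ≥ 2. If N is even: [k^i, L^{12}]_{q²} = 0 and [k^i, L^{−2,−1}]_{q^{−2}} = 0 for i = 1, 2; [k^1, L^{−1,2}]_{q^{−2}} = 0, [k^2, L^{−1,2}]_{q²} = 0, [k^1, L^{−2,1}]_{q²} = 0, [k^2, L^{−2,1}]_{q^{−2}}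 = 0; and [k^i, E] = 0 for i ≥ 3 and E any of L^{12}, L^{−1,2}, L^{−2,1}, L^{−2,−1}. -/
noncomputable section

open Finset

variable {K : Type*} [Field K] {A : Type*} [Ring A] [Algebra K A]

set_option linter.unusedSectionVars false

namespace CartanAux

variable {K : Type*} [Field K] {A : Type*} [Ring A] [Algebra K A]

lemma qc_mulR {g X Y : A} {u v : K} (hX : g * X = u • (X * g)) (hY : g * Y = v • (Y * g)) :
    g * (X * Y) = (u * v) • (X * Y * g) := by
  calc g * (X * Y) = (g * X) * Y := by rw [mul_assoc]
    _ = u • (X * (g * Y)) := by rw [hX, smul_mul_assoc, mul_assoc]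
    _ = (u * v) • (X * Y * g) := by rw [hY, mul_smul_comm, smul_smul, ← mul_assoc]

lemma qc_mulL {g1 g2 X : A} {u v : K} (h1 : g1 * X = u • (X * g1)) (h2 : g2 * X = v • (X * g2)) :
    (g1 * g2) * X = (u * v) • (X * (g1 * g2)) := by
  calc (g1 * g2) * X = g1 * (g2 * X) := by rw [mul_assoc]
    _ = v • ((g1 * X) * g2) := by rw [h2, mul_smul_comm, ← mul_assoc]
    _ = (u * v) • (X * (g1 * g2)) := by
        rw [h1, smul_mul_assoc, smul_smul, mul_comm v u, mul_assoc]

lemma qc_smul {g X : A} {u : K} (c : K) (hX : g * X = u • (X * g)) :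
    g * (c • X) = u • ((c • X) * g) := by
  rw [mul_smul_comm, hX, smul_mul_assoc, smul_smul, smul_smul, mul_comm]

lemma qc_sub {g X Y : A} {u : K} (hX : g * X = u • (X * g)) (hY : g * Y = u • (Y * g)) :
    g * (X - Y) = u • ((X - Y) * g) := by
  rw [mul_sub, hX, hY, sub_mul, smul_sub]

lemma qc_one {g X : A} (hX : g * X = X * g) : g * X = (1 : K) • (X * g) := by
  rw [hX, one_smul]

lemma cm_mulR {g X Y : A} (hX : g * X = X * g) (hY : g * Y = Y * g) :
    g * (X * Y) = (X * Y) * g := by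
  rw [← mul_assoc, hX, mul_assoc, hY, ← mul_assoc]

lemma cm_mulL {g1 g2 X : A} (h1 : g1 * X = X * g1) (h2 : g2 * X = X * g2) :
    (g1 * g2) * X = X * (g1 * g2) := by
  rw [mul_assoc, h2, ← mul_assoc, h1, mul_assoc]

lemma inv_swap {a ai x : A} {c : K} (hc : c ≠ 0) (h1 : a * ai = 1) (h2 : ai * a = 1)
    (hax : a * x = c • (x * a)) : ai * x = c⁻¹ • (x * ai) := by
  have hx : x * a = c⁻¹ • (a * x) := by rw [hax, inv_smul_smul₀ hc]
  calc ai * x = ai * x * (a * ai) := by rw [h1, mul_one]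
    _ = ai * (x * a) * ai := by rw [← mul_assoc, mul_assoc ai x a]
    _ = ai * (c⁻¹ • (a * x)) * ai := by rw [hx]
    _ = c⁻¹ • (ai * a * x * ai) := by rw [mul_smul_comm, smul_mul_assoc, ← mul_assoc]
    _ = c⁻¹ • (x * ai) := by rw [h2, one_mul]

variable {N : ℕ} {p : K} {χ D m mi : ℤ → A}

/-- weight of `χ j` under conjugation by `kgen i` -/
def Wx (p : K) (i j : ℤ) : K :=
  (if i = j then p ^ 4 else 1) * (if -i = j then (p ^ 4)⁻¹ else 1)

/-- weight of `D j` under conjugation by `kgen i` -/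
def Wd (p : K) (i j : ℤ) : K :=
  (if i = j then (p ^ 4)⁻¹ else 1) * (if -i = j then p ^ 4 else 1)

lemma pm4 (p : K) : p ^ (-4 : ℤ) = (p ^ 4)⁻¹ := by
  rw [zpow_neg]; norm_cast

lemma pm2 (p : K) : p ^ (-2 : ℤ) = (p ^ 2)⁻¹ := by
  rw [zpow_neg]; norm_cast

lemma kgen_sq (i : ℤ) : (kgen m mi i : A) = (m i * m i) * (mi (-i) * mi (-i)) := by
  rw [kgen, sq, sq]

section
variable (h : Decoupled N p χ D m mi) (hp : p ≠ 0)
include h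

lemma mi_m (i j : ℤ) : mi i * m j = m j * mi i := by
  have h1 := (h.m_inv i).1
  have h2 := (h.m_inv i).2
  have e1 : mi i * m j = mi i * m j * m i * mi i := by
    rw [mul_assoc (mi i * m j), h1, mul_one]
  have e2 : mi i * m j * m i = mi i * m i * m j := by
    rw [mul_assoc, h.m_comm j i, ← mul_assoc]
  rw [e1, e2, h2, one_mul]

lemma mi_mi (i j : ℤ) : mi i * mi j = mi j * mi i := by
  have h1 := (h.m_inv i).1
  have h2 := (h.m_inv i).2
  have e1 : mi i * mi j = mi i * mi j * m i * mi i := by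
    rw [mul_assoc (mi i * mi j), h1, mul_one]
  have e2 : mi i * mi j * m i = mi i * m i * mi j := by
    rw [mul_assoc, mi_m h j i, ← mul_assoc]
  rw [e1, e2, h2, one_mul]

lemma kgen_m (i j : ℤ) : kgen m mi i * m j = m j * kgen m mi i := by
  rw [kgen_sq i]
  exact cm_mulL (cm_mulL (h.m_comm i j) (h.m_comm i j))
    (cm_mulL (mi_m h (-i) j) (mi_m h (-i) j))

lemma kgen_mi (i j : ℤ) : kgen m mi i * mi j = mi j * kgen m mi i := by
  rw [kgen_sq i]
  exact cm_mulL (cm_mulL (mi_m h j i).symm (mi_m h j i).symm)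
    (cm_mulL (mi_mi h (-i) j) (mi_mi h (-i) j))

include hp

lemma mi_x (i j : ℤ) :
    mi i * χ j = (if i = j then ((p : K) ^ 2)⁻¹ else 1) • (χ j * mi i) := by
  have hc : (if i = j then (p ^ 2 : K) else 1) ≠ 0 := by
    split_ifs
    · exact pow_ne_zero 2 hp
    · exact one_ne_zero
  have := inv_swap hc (h.m_inv i).1 (h.m_inv i).2 (h.m_x i j)
  simpa [apply_ite (Inv.inv : K → K)] using this

lemma mi_D (i j : ℤ) :
    mi i * D j = (if i = j then ((p : K) ^ (-2 : ℤ))⁻¹ else 1) • (D j * mi i) := by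
  have hc : (if i = j then (p ^ (-2 : ℤ) : K) else 1) ≠ 0 := by
    split_ifs
    · exact zpow_ne_zero _ hp
    · exact one_ne_zero
  have := inv_swap hc (h.m_inv i).1 (h.m_inv i).2 (h.m_D i j)
  simpa [apply_ite (Inv.inv : K → K)] using this

lemma kgen_x (i j : ℤ) :
    kgen m mi i * χ j = Wx p i j • (χ j * kgen m mi i) := by
  have h1 := h.m_x i j
  have h2 := mi_x h hp (-i) j
  have key := qc_mulL (qc_mulL h1 h1) (qc_mulL h2 h2)
  rw [kgen_sq i, key]
  congr 1
  simp only [Wx]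
  split_ifs <;> field_simp <;> ring

lemma kgen_D (i j : ℤ) :
    kgen m mi i * D j = Wd p i j • (D j * kgen m mi i) := by
  have h1 := h.m_D i j
  have h2 := mi_D h hp (-i) j
  have key := qc_mulL (qc_mulL h1 h1) (qc_mulL h2 h2)
  rw [kgen_sq i, key]
  congr 1
  simp only [Wd, pm2 p]
  split_ifs <;> field_simp <;> ring

end

end CartanAux

namespace CartanAux

variable {K : Type*} [Field K] {A : Type*} [Ring A] [Algebra K A]
variable {N : ℕ} {p : K} {χ D m mi : ℤ → A}

lemma qc_term {g M xb de : A} {u u' : K} (hM : g * M = M * g)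
    (hb : g * xb = u • (xb * g)) (he : g * de = u' • (de * g)) (s : K) :
    g * (M * (xb * (s • de))) = (u * u') • (M * (xb * (s • de)) * g) := by
  have := qc_mulR (qc_one hM) (qc_mulR hb (qc_smul s he))
  rwa [one_mul] at this

lemma qc_Lfull {g mia T1 T2 : A} {w : K} (ha : g * mia = mia * g)
    (h1 : g * T1 = w • (T1 * g)) (h2 : g * T2 = w • (T2 * g)) :
    g * (mia * (T1 - T2)) = w • (mia * (T1 - T2) * g) := by
  have := qc_mulR (qc_one ha) (qc_sub h1 h2)
  rwa [one_mul] at this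

section
variable (h : Decoupled N p χ D m mi) (hp : p ≠ 0)
include h hp

lemma qc_Lpos (i k : ℤ) (w : K)
    (hw : Wx p i (1 - k) * Wd p i (-k) = w)
    (hw' : Wx p i k * Wd p i (-(1 - k)) = w) :
    kgen m mi i * Lpos N p χ D m mi k = w • (Lpos N p χ D m mi k * kgen m mi i) := by
  have t1 := qc_term (cm_mulR (kgen_m h i (-k)) (kgen_m h i (k - 1)))
      (kgen_x h hp i (1 - k)) (kgen_D h hp i (-k)) (p ^ (-rho2 N k))
  have t2 := qc_mulR (kgen_x h hp i k)
      (qc_smul (p ^ (-rho2 N (1 - k))) (kgen_D h hp i (-(1 - k))))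
  rw [hw] at t1; rw [hw'] at t2
  have := qc_Lfull (kgen_mi h i k) (qc_smul (p ^ (2 * rho2 N k)) t1) t2
  simpa only [Lpos, Du] using this

lemma qc_Lneg (i k : ℤ) (w : K)
    (hw : Wx p i (-k) * Wd p i (-(k - 1)) = w)
    (hw' : Wx p i (k - 1) * Wd p i (- -k) = w) :
    kgen m mi i * Lneg N p χ D m mi k = w • (Lneg N p χ D m mi k * kgen m mi i) := by
  have t1 := qc_term (cm_mulR (kgen_m h i (-k)) (kgen_m h i (k - 1)))
      (kgen_x h hp i (-k)) (kgen_D h hp i (-(k - 1))) (p ^ (-rho2 N (k - 1)))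
  have t2 := qc_mulR (kgen_x h hp i (k - 1))
      (qc_smul (p ^ (-rho2 N (-k))) (kgen_D h hp i (- -k)))
  rw [hw] at t1; rw [hw'] at t2
  have := qc_Lfull (kgen_mi h i k) (qc_smul (p ^ (2 * rho2 N k - 2)) t1) t2
  simpa only [Lneg, Du] using this

lemma qc_L01 (i : ℤ) (w : K)
    (hw : Wx p i 0 * Wd p i (-1) = w)
    (hw' : Wx p i 1 * Wd p i (-0) = w) :
    kgen m mi i * L01 N p χ D m mi = w • (L01 N p χ D m mi * kgen m mi i) := by
  have t1 := qc_term (kgen_m h i (-1))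
      (kgen_x h hp i 0) (kgen_D h hp i (-1)) (p ^ (-rho2 N 1))
  have t2 := qc_mulR (kgen_x h hp i 1)
      (qc_smul (p ^ (-rho2 N 0)) (kgen_D h hp i (-0)))
  rw [hw] at t1; rw [hw'] at t2
  have := qc_Lfull (kgen_mi h i 1) (qc_smul (p ^ (-4 : ℤ)) t1) t2
  simpa only [L01, Du] using this

lemma qc_Lm10 (i : ℤ) (w : K)
    (hw : Wx p i (-1) * Wd p i (-0) = w)
    (hw' : Wx p i 0 * Wd p i (- -1) = w) :
    kgen m mi i * Lm10 N p χ D m mi = w • (Lm10 N p χ D m mi * kgen m mi i) := by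
  have t1 := qc_term (kgen_m h i (-1))
      (kgen_x h hp i (-1)) (kgen_D h hp i (-0)) (p ^ (-rho2 N 0))
  have t2 := qc_mulR (kgen_x h hp i 0)
      (qc_smul (p ^ (-rho2 N (-1))) (kgen_D h hp i (- -1)))
  rw [hw] at t1; rw [hw'] at t2
  have := qc_Lfull (kgen_mi h i 1) t1 t2
  simpa only [Lm10, Du] using this

lemma qc_L12 (i : ℤ) (w : K)
    (hw : Wx p i 1 * Wd p i (-2) = w)
    (hw' : Wx p i 2 * Wd p i (-1) = w) :
    kgen m mi i * L12 N p χ D m mi = w • (L12 N p χ D m mi * kgen m mi i) := by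
  have t1 := qc_term (cm_mulR (cm_mulR (kgen_m h i (-2)) (kgen_m h i (-1))) (kgen_mi h i 1))
      (kgen_x h hp i 1) (kgen_D h hp i (-2)) (p ^ (-rho2 N 2))
  have t2 := qc_mulR (kgen_x h hp i 2)
      (qc_smul (p ^ (-rho2 N 1)) (kgen_D h hp i (-1)))
  rw [hw] at t1; rw [hw'] at t2
  have := qc_Lfull (kgen_mi h i 2) (qc_smul (p ^ (-4 : ℤ)) t1) t2
  simpa only [L12, Du] using this

lemma qc_Lm12 (i : ℤ) (w : K)
    (hw : Wx p i (-1) * Wd p i (-2) = w)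
    (hw' : Wx p i 2 * Wd p i (- -1) = w) :
    kgen m mi i * Lm12 N p χ D m mi = w • (Lm12 N p χ D m mi * kgen m mi i) := by
  have t1 := qc_term (cm_mulR (cm_mulR (kgen_m h i (-2)) (kgen_m h i 1)) (kgen_mi h i (-1)))
      (kgen_x h hp i (-1)) (kgen_D h hp i (-2)) (p ^ (-rho2 N 2))
  have t2 := qc_mulR (kgen_x h hp i 2)
      (qc_smul (p ^ (-rho2 N (-1))) (kgen_D h hp i (- -1)))
  rw [hw] at t1; rw [hw'] at t2
  have := qc_Lfull (kgen_mi h i 2) (qc_smul (p ^ (-4 : ℤ)) t1) t2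
  simpa only [Lm12, Du] using this

lemma qc_Lm21 (i : ℤ) (w : K)
    (hw : Wx p i (-2) * Wd p i (-1) = w)
    (hw' : Wx p i 1 * Wd p i (- -2) = w) :
    kgen m mi i * Lm21 N p χ D m mi = w • (Lm21 N p χ D m mi * kgen m mi i) := by
  have t1 := qc_term (cm_mulR (cm_mulR (kgen_m h i (-2)) (kgen_m h i 1)) (kgen_mi h i (-1)))
      (kgen_x h hp i (-2)) (kgen_D h hp i (-1)) (p ^ (-rho2 N 1))
  have t2 := qc_mulR (kgen_x h hp i 1)
      (qc_smul (p ^ (-rho2 N (-2))) (kgen_D h hp i (- -2)))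
  rw [hw] at t1; rw [hw'] at t2
  have := qc_Lfull (kgen_mi h i 2) (qc_smul (p ^ (-2 : ℤ)) t1) t2
  simpa only [Lm21, Du] using this

lemma qc_Lm2m1 (i : ℤ) (w : K)
    (hw : Wx p i (-2) * Wd p i (- -1) = w)
    (hw' : Wx p i (-1) * Wd p i (- -2) = w) :
    kgen m mi i * Lm2m1 N p χ D m mi = w • (Lm2m1 N p χ D m mi * kgen m mi i) := by
  have t1 := qc_term (cm_mulR (cm_mulR (kgen_m h i (-2)) (kgen_m h i (-1))) (kgen_mi h i 1))
      (kgen_x h hp i (-2)) (kgen_D h hp i (- -1)) (p ^ (-rho2 N (-1)))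
  have t2 := qc_mulR (kgen_x h hp i (-1))
      (qc_smul (p ^ (-rho2 N (-2))) (kgen_D h hp i (- -2)))
  rw [hw] at t1; rw [hw'] at t2
  have := qc_Lfull (kgen_mi h i 2) (qc_smul (p ^ (-2 : ℤ)) t1) t2
  simpa only [Lm2m1, Du] using this

end
end CartanAux

namespace CartanAux
variable {K : Type*} [Field K] {A : Type*} [Ring A] [Algebra K A]

lemma qbr_eq_zero {a : K} {g L : A} (hq : g * L = a • (L * g)) : qbr a g L = 0 := by
  simp only [qbr]; rw [hq, sub_self]

lemma comm_of_qc {g L : A} (hq : g * L = (1 : K) • (L * g)) : g * L = L * g := by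
  rwa [one_smul] at hq

end CartanAux

open CartanAux

set_option maxHeartbeats 2000000 in
/-- q-commutation relations of the Cartan generators `k^i` with the
Chevalley generators. -/
theorem cartan_chevalley_qcomm [CharZero K] (N : ℕ) (hN : 3 ≤ N) (p : K) (hp : p ≠ 0)
    (hpu : ∀ k : ℕ, k ≠ 0 → p ^ k ≠ 1)
    (χ D m mi : ℤ → A) (h : Decoupled N p χ D m mi) :
    (∀ kk i : ℤ, (if N % 2 = 1 then 2 else 3) ≤ kk → kk ≤ (N / 2 : ℕ) →
        1 ≤ i → i ≤ (N / 2 : ℕ) →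
      (i = kk →
        qbr (p ^ 4) (kgen m mi i) (Lpos N p χ D m mi kk) = 0 ∧
        qbr (p ^ (-4 : ℤ)) (kgen m mi i) (Lneg N p χ D m mi kk) = 0) ∧
      (i = kk - 1 →
        qbr (p ^ (-4 : ℤ)) (kgen m mi i) (Lpos N p χ D m mi kk) = 0 ∧
        qbr (p ^ 4) (kgen m mi i) (Lneg N p χ D m mi kk) = 0) ∧
      (i ≠ kk → i ≠ kk - 1 →
        kgen m mi i * Lpos N p χ D m mi kk = Lpos N p χ D m mi kk * kgen m mi i ∧
        kgen m mi i * Lneg N p χ D m mi kk = Lneg N p χ D m mi kk * kgen m mi i)) ∧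
    (N % 2 = 1 →
      qbr (p ^ 4) (kgen m mi 1) (L01 N p χ D m mi) = 0 ∧
      qbr (p ^ (-4 : ℤ)) (kgen m mi 1) (Lm10 N p χ D m mi) = 0 ∧
      (∀ i : ℤ, 2 ≤ i → i ≤ (N / 2 : ℕ) →
        kgen m mi i * L01 N p χ D m mi = L01 N p χ D m mi * kgen m mi i ∧
        kgen m mi i * Lm10 N p χ D m mi = Lm10 N p χ D m mi * kgen m mi i)) ∧
    (N % 2 = 0 →
      qbr (p ^ 4) (kgen m mi 1) (L12 N p χ D m mi) = 0 ∧
      qbr (p ^ 4) (kgen m mi 2) (L12 N p χ D m mi) = 0 ∧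
      qbr (p ^ (-4 : ℤ)) (kgen m mi 1) (Lm2m1 N p χ D m mi) = 0 ∧
      qbr (p ^ (-4 : ℤ)) (kgen m mi 2) (Lm2m1 N p χ D m mi) = 0 ∧
      qbr (p ^ (-4 : ℤ)) (kgen m mi 1) (Lm12 N p χ D m mi) = 0 ∧
      qbr (p ^ 4) (kgen m mi 2) (Lm12 N p χ D m mi) = 0 ∧
      qbr (p ^ 4) (kgen m mi 1) (Lm21 N p χ D m mi) = 0 ∧
      qbr (p ^ (-4 : ℤ)) (kgen m mi 2) (Lm21 N p χ D m mi) = 0 ∧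
      (∀ i : ℤ, 3 ≤ i → i ≤ (N / 2 : ℕ) →
        kgen m mi i * L12 N p χ D m mi = L12 N p χ D m mi * kgen m mi i ∧
        kgen m mi i * Lm12 N p χ D m mi = Lm12 N p χ D m mi * kgen m mi i ∧
        kgen m mi i * Lm21 N p χ D m mi = Lm21 N p χ D m mi * kgen m mi i ∧
        kgen m mi i * Lm2m1 N p χ D m mi = Lm2m1 N p χ D m mi * kgen m mi i)) := by
  constructor
  · intro kk i hk1 _ hi1 _
    have hk2 : (2 : ℤ) ≤ kk := le_trans (by split_ifs <;> omega) hk1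
    refine ⟨fun hik => ?_, fun hik => ?_, fun hne1 hne2 => ?_⟩
    · subst hik
      exact ⟨qbr_eq_zero (qc_Lpos h hp i i (p ^ 4)
          (by simp only [Wx, Wd, pm4]; split_ifs <;> first | omega | ring1 | exact (show False by first | assumption | omega).elim)
          (by simp only [Wx, Wd, pm4]; split_ifs <;> first | omega | ring1 | exact (show False by first | assumption | omega).elim)),
        qbr_eq_zero (qc_Lneg h hp i i (p ^ (-4 : ℤ))
          (by simp only [Wx, Wd, pm4]; split_ifs <;> first | omega | ring1 | exact (show False by first | assumption | omega).elim)
          (by simp only [Wx, Wd, pm4]; split_ifs <;> first | omega | ring1 | exact (show False by first | assumption | omega).elim))⟩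
    · subst hik
      exact ⟨qbr_eq_zero (qc_Lpos h hp (kk - 1) kk (p ^ (-4 : ℤ))
          (by simp only [Wx, Wd, pm4]; split_ifs <;> first | omega | ring1 | exact (show False by first | assumption | omega).elim)
          (by simp only [Wx, Wd, pm4]; split_ifs <;> first | omega | ring1 | exact (show False by first | assumption | omega).elim)),
        qbr_eq_zero (qc_Lneg h hp (kk - 1) kk (p ^ 4)
          (by simp only [Wx, Wd, pm4]; split_ifs <;> first | omega | ring1 | exact (show False by first | assumption | omega).elim)
          (by simp only [Wx, Wd, pm4]; split_ifs <;> first | omega | ring1 | exact (show False by first | assumption | omega).elim))⟩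
    · exact ⟨comm_of_qc (qc_Lpos h hp i kk 1
          (by simp only [Wx, Wd, pm4]; split_ifs <;> first | omega | ring1 | exact (show False by first | assumption | omega).elim)
          (by simp only [Wx, Wd, pm4]; split_ifs <;> first | omega | ring1 | exact (show False by first | assumption | omega).elim)),
        comm_of_qc (qc_Lneg h hp i kk 1
          (by simp only [Wx, Wd, pm4]; split_ifs <;> first | omega | ring1 | exact (show False by first | assumption | omega).elim)
          (by simp only [Wx, Wd, pm4]; split_ifs <;> first | omega | ring1 | exact (show False by first | assumption | omega).elim))⟩
  constructor
  · intro _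
    refine ⟨qbr_eq_zero (qc_L01 h hp 1 (p ^ 4)
        (by simp only [Wx, Wd, pm4]; split_ifs <;> first | omega | ring1 | exact (show False by first | assumption | omega).elim)
        (by simp only [Wx, Wd, pm4]; split_ifs <;> first | omega | ring1 | exact (show False by first | assumption | omega).elim)),
      qbr_eq_zero (qc_Lm10 h hp 1 (p ^ (-4 : ℤ))
        (by simp only [Wx, Wd, pm4]; split_ifs <;> first | omega | ring1 | exact (show False by first | assumption | omega).elim)
        (by simp only [Wx, Wd, pm4]; split_ifs <;> first | omega | ring1 | exact (show False by first | assumption | omega).elim)),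
      fun i hi _ => ⟨comm_of_qc (qc_L01 h hp i 1
        (by simp only [Wx, Wd, pm4]; split_ifs <;> first | omega | ring1 | exact (show False by first | assumption | omega).elim)
        (by simp only [Wx, Wd, pm4]; split_ifs <;> first | omega | ring1 | exact (show False by first | assumption | omega).elim)),
      comm_of_qc (qc_Lm10 h hp i 1
        (by simp only [Wx, Wd, pm4]; split_ifs <;> first | omega | ring1 | exact (show False by first | assumption | omega).elim)
        (by simp only [Wx, Wd, pm4]; split_ifs <;> first | omega | ring1 | exact (show False by first | assumption | omega).elim))⟩⟩
  · intro _
    refine ⟨qbr_eq_zero (qc_L12 h hp 1 (p ^ 4)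
        (by simp only [Wx, Wd, pm4]; split_ifs <;> first | omega | ring1 | exact (show False by first | assumption | omega).elim)
        (by simp only [Wx, Wd, pm4]; split_ifs <;> first | omega | ring1 | exact (show False by first | assumption | omega).elim)),
      qbr_eq_zero (qc_L12 h hp 2 (p ^ 4)
        (by simp only [Wx, Wd, pm4]; split_ifs <;> first | omega | ring1 | exact (show False by first | assumption | omega).elim)
        (by simp only [Wx, Wd, pm4]; split_ifs <;> first | omega | ring1 | exact (show False by first | assumption | omega).elim)),
      qbr_eq_zero (qc_Lm2m1 h hp 1 (p ^ (-4 : ℤ))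
        (by simp only [Wx, Wd, pm4]; split_ifs <;> first | omega | ring1 | exact (show False by first | assumption | omega).elim)
        (by simp only [Wx, Wd, pm4]; split_ifs <;> first | omega | ring1 | exact (show False by first | assumption | omega).elim)),
      qbr_eq_zero (qc_Lm2m1 h hp 2 (p ^ (-4 : ℤ))
        (by simp only [Wx, Wd, pm4]; split_ifs <;> first | omega | ring1 | exact (show False by first | assumption | omega).elim)
        (by simp only [Wx, Wd, pm4]; split_ifs <;> first | omega | ring1 | exact (show False by first | assumption | omega).elim)),
      qbr_eq_zero (qc_Lm12 h hp 1 (p ^ (-4 : ℤ))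
        (by simp only [Wx, Wd, pm4]; split_ifs <;> first | omega | ring1 | exact (show False by first | assumption | omega).elim)
        (by simp only [Wx, Wd, pm4]; split_ifs <;> first | omega | ring1 | exact (show False by first | assumption | omega).elim)),
      qbr_eq_zero (qc_Lm12 h hp 2 (p ^ 4)
        (by simp only [Wx, Wd, pm4]; split_ifs <;> first | omega | ring1 | exact (show False by first | assumption | omega).elim)
        (by simp only [Wx, Wd, pm4]; split_ifs <;> first | omega | ring1 | exact (show False by first | assumption | omega).elim)),
      qbr_eq_zero (qc_Lm21 h hp 1 (p ^ 4)
        (by simp only [Wx, Wd, pm4]; split_ifs <;> first | omega | ring1 | exact (show False by first | assumption | omega).elim)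
        (by simp only [Wx, Wd, pm4]; split_ifs <;> first | omega | ring1 | exact (show False by first | assumption | omega).elim)),
      qbr_eq_zero (qc_Lm21 h hp 2 (p ^ (-4 : ℤ))
        (by simp only [Wx, Wd, pm4]; split_ifs <;> first | omega | ring1 | exact (show False by first | assumption | omega).elim)
        (by simp only [Wx, Wd, pm4]; split_ifs <;> first | omega | ring1 | exact (show False by first | assumption | omega).elim)),
      fun i hi _ => ⟨comm_of_qc (qc_L12 h hp i 1
        (by simp only [Wx, Wd, pm4]; split_ifs <;> first | omega | ring1 | exact (show False by first | assumption | omega).elim)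
        (by simp only [Wx, Wd, pm4]; split_ifs <;> first | omega | ring1 | exact (show False by first | assumption | omega).elim)),
      comm_of_qc (qc_Lm12 h hp i 1
        (by simp only [Wx, Wd, pm4]; split_ifs <;> first | omega | ring1 | exact (show False by first | assumption | omega).elim)
        (by simp only [Wx, Wd, pm4]; split_ifs <;> first | omega | ring1 | exact (show False by first | assumption | omega).elim)),
      comm_of_qc (qc_Lm21 h hp i 1
        (by simp only [Wx, Wd, pm4]; split_ifs <;> first | omega | ring1 | exact (show False by first | assumption | omega).elim)
        (by simp only [Wx, Wd, pm4]; split_ifs <;> first | omega | ring1 | exact (show False by first | assumption | omega).elim)),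
      comm_of_qc (qc_Lm2m1 h hp i 1
        (by simp only [Wx, Wd, pm4]; split_ifs <;> first | omega | ring1 | exact (show False by first | assumption | omega).elim)
        (by simp only [Wx, Wd, pm4]; split_ifs <;> first | omega | ring1 | exact (show False by first | assumption | omega).elim))⟩⟩
end
end

section
/- The distant Chevalley generators commute (Serre-type relations): (i) for m, k with |m − k| > 1 (both in the generic range: m, k ≥ 1 for N odd, with the conventions L^{1−1,1} := L^{01}, L^{−1,1−1} := L^{−1,0}; m, k ≥ 3 for N even) one has [L^{1−m,m}, L^{1−k,k}] = 0 and [L^{−m,m−1}, L^{−k,k−1}] = 0; (ii) for N even, [L^{12}, L^{1−j,j}] = 0 and [L^{−2,−1}, L^{−j,j−1}] = 0 for j = 4, 5, …, n, and moreover [L^{12}, L^{−1,2}] = 0 and [L^{−2,−1}, L^{−2,1}] = 0. -/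
noncomputable section

open Finset

variable {K : Type*} [Field K] {A : Type*} [Ring A] [Algebra K A]

/-- The positive simple-root generator with the convention `L^{1−1,1} := L^{01}` for `N` odd. -/
def LP (N : ℕ) (p : K) (χ D m mi : ℤ → A) (k : ℤ) : A :=
  if N % 2 = 1 ∧ k = 1 then L01 N p χ D m mi else Lpos N p χ D m mi k

/-- The negative simple-root generator with the convention `L^{−1,0}` for `N` odd. -/
def LN (N : ℕ) (p : K) (χ D m mi : ℤ → A) (k : ℤ) : A :=
  if N % 2 = 1 ∧ k = 1 then Lm10 N p χ D m mi else Lneg N p χ D m mi k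

section Helpers

variable {N : ℕ} {p : K} {χ D m mi : ℤ → A}

lemma lift_comm {a b : A} (hc : Commute a b) (z : A) : b * (a * z) = a * (b * z) := by
  rw [← mul_assoc, ← hc.eq, mul_assoc]

lemma lift_scal {a b : A} {c : K} (hab : b * a = c • (a * b)) (z : A) :
    b * (a * z) = c • (a * (b * z)) := by
  rw [← mul_assoc, hab, smul_mul_assoc, mul_assoc]

lemma lift_exp {x d : A} {c : K} (hDx : d * x = 1 + c • (x * d)) (z : A) :
    d * (x * z) = z + c • (x * (d * z)) := by
  rw [← mul_assoc, hDx, add_mul, one_mul, smul_mul_assoc, mul_assoc]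

lemma rev_scal {a b : A} {c d : K} (hcd : d * c = 1) (hab : a = c • b) : b = d • a := by
  rw [hab, smul_smul, hcd, one_smul]

namespace Decoupled

variable (h : Decoupled N p χ D m mi)
include h

lemma commute_mi_left {i : ℤ} {b : A} (hb : Commute (m i) b) : Commute (mi i) b := by
  have h1 := (h.m_inv i).1
  have h2 := (h.m_inv i).2
  show mi i * b = b * mi i
  calc mi i * b = mi i * (b * (m i * mi i)) := by rw [h1, mul_one]
    _ = mi i * (b * m i * mi i) := by rw [mul_assoc]
    _ = mi i * (m i * b * mi i) := by rw [← hb.eq]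
    _ = mi i * (m i * (b * mi i)) := by rw [mul_assoc]
    _ = mi i * m i * (b * mi i) := by rw [← mul_assoc]
    _ = b * mi i := by rw [h2, one_mul]

lemma conj_mi {i : ℤ} {a : A} {c : K} (hma : m i * a = c • (a * m i)) :
    a * mi i = c • (mi i * a) := by
  have h1 := (h.m_inv i).1
  have h2 := (h.m_inv i).2
  calc a * mi i = mi i * m i * (a * mi i) := by rw [h2, one_mul]
    _ = mi i * (m i * (a * mi i)) := by rw [mul_assoc]
    _ = mi i * (m i * a * mi i) := by rw [← mul_assoc (m i)]
    _ = mi i * (c • (a * m i) * mi i) := by rw [hma]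
    _ = c • (mi i * (a * (m i * mi i))) := by
        rw [smul_mul_assoc, mul_smul_comm, mul_assoc a]
    _ = c • (mi i * a) := by rw [h1, mul_one]

lemma cmx {i j : ℤ} (hij : i ≠ j) : Commute (m i) (χ j) := by
  have := h.m_x i j
  rw [if_neg hij, one_smul] at this
  exact this

lemma cmD {i j : ℤ} (hij : i ≠ j) : Commute (m i) (D j) := by
  have := h.m_D i j
  rw [if_neg hij, one_smul] at this
  exact this

lemma letter_pack {i j : ℤ} (hij : i ≠ j) (a : A)
    (ha : a = χ i ∨ a = D i ∨ a = m i ∨ a = mi i) :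
    Commute a (χ j) ∧ Commute a (D j) ∧ Commute a (m j) ∧ Commute a (mi j) := by
  have hji : j ≠ i := hij.symm
  rcases ha with rfl | rfl | rfl | rfl
  · exact ⟨h.comm_xx i j hij, h.comm_xD i j hij, (h.cmx hji).symm,
      (h.commute_mi_left (h.cmx hji)).symm⟩
  · exact ⟨(h.comm_xD j i hji).symm, h.comm_DD i j hij, (h.cmD hji).symm,
      (h.commute_mi_left (h.cmD hji)).symm⟩
  · exact ⟨h.cmx hij, h.cmD hij, h.m_comm i j,
      (h.commute_mi_left (h.m_comm j i)).symm⟩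
  · exact ⟨h.commute_mi_left (h.cmx hij), h.commute_mi_left (h.cmD hij),
      h.commute_mi_left (h.m_comm i j),
      h.commute_mi_left (h.commute_mi_left (h.m_comm j i)).symm⟩

/-- Support predicate of the simple-root generators at `k`. -/
def Supp (k j : ℤ) : Prop := j = k ∨ j = -k ∨ j = k - 1 ∨ j = 1 - k

lemma commute_Lpos {w : A} {k : ℤ}
    (hw : ∀ j : ℤ, Supp k j →
      Commute w (χ j) ∧ Commute w (D j) ∧ Commute w (m j) ∧ Commute w (mi j)) :
    Commute w (Lpos N p χ D m mi k) := by
  obtain ⟨hx1, hD1, hm1, hmi1⟩ := hw k (Or.inl rfl)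
  obtain ⟨hx2, hD2, hm2, hmi2⟩ := hw (-k) (Or.inr (Or.inl rfl))
  obtain ⟨hx3, hD3, hm3, hmi3⟩ := hw (k - 1) (Or.inr (Or.inr (Or.inl rfl)))
  obtain ⟨hx4, hD4, hm4, hmi4⟩ := hw (1 - k) (Or.inr (Or.inr (Or.inr rfl)))
  have hDk1 : Commute w (D (-(1 - k))) := by rw [show -(1 - k) = k - 1 by ring]; exact hD3
  unfold Lpos Du
  exact hmi1.mul_right
    (Commute.sub_right
      (Commute.smul_right
        ((hm2.mul_right hm3).mul_right (hx4.mul_right (hD2.smul_right _))) _)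
      (hx1.mul_right (hDk1.smul_right _)))

lemma commute_Lneg {w : A} {k : ℤ}
    (hw : ∀ j : ℤ, Supp k j →
      Commute w (χ j) ∧ Commute w (D j) ∧ Commute w (m j) ∧ Commute w (mi j)) :
    Commute w (Lneg N p χ D m mi k) := by
  obtain ⟨hx1, hD1, hm1, hmi1⟩ := hw k (Or.inl rfl)
  obtain ⟨hx2, hD2, hm2, hmi2⟩ := hw (-k) (Or.inr (Or.inl rfl))
  obtain ⟨hx3, hD3, hm3, hmi3⟩ := hw (k - 1) (Or.inr (Or.inr (Or.inl rfl)))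
  obtain ⟨hx4, hD4, hm4, hmi4⟩ := hw (1 - k) (Or.inr (Or.inr (Or.inr rfl)))
  have hDk1 : Commute w (D (-(k - 1))) := by rw [show -(k - 1) = 1 - k by ring]; exact hD4
  have hDk : Commute w (D (- -k)) := by rw [neg_neg]; exact hD1
  unfold Lneg Du
  exact hmi1.mul_right
    (Commute.sub_right
      (Commute.smul_right
        ((hm2.mul_right hm3).mul_right (hx2.mul_right (hDk1.smul_right _))) _)
      (hx3.mul_right (hDk.smul_right _)))

lemma commute_L01 {w : A}
    (hw : ∀ j : ℤ, Supp 1 j →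
      Commute w (χ j) ∧ Commute w (D j) ∧ Commute w (m j) ∧ Commute w (mi j)) :
    Commute w (L01 N p χ D m mi) := by
  obtain ⟨hx1, hD1, hm1, hmi1⟩ := hw 1 (Or.inl rfl)
  obtain ⟨hx2, hD2, hm2, hmi2⟩ := hw (-1) (Or.inr (Or.inl rfl))
  obtain ⟨hx0, hD0, hm0, hmi0⟩ := hw 0 (Or.inr (Or.inr (Or.inl rfl)))
  have hD0' : Commute w (D (-0)) := by rw [neg_zero]; exact hD0
  unfold L01 Du
  exact hmi1.mul_right
    (Commute.sub_right
      (Commute.smul_right (hm2.mul_right (hx0.mul_right (hD2.smul_right _))) _)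
      (hx1.mul_right (hD0'.smul_right _)))

lemma commute_Lm10 {w : A}
    (hw : ∀ j : ℤ, Supp 1 j →
      Commute w (χ j) ∧ Commute w (D j) ∧ Commute w (m j) ∧ Commute w (mi j)) :
    Commute w (Lm10 N p χ D m mi) := by
  obtain ⟨hx1, hD1, hm1, hmi1⟩ := hw 1 (Or.inl rfl)
  obtain ⟨hx2, hD2, hm2, hmi2⟩ := hw (-1) (Or.inr (Or.inl rfl))
  obtain ⟨hx0, hD0, hm0, hmi0⟩ := hw 0 (Or.inr (Or.inr (Or.inl rfl)))
  have hD0' : Commute w (D (-0)) := by rw [neg_zero]; exact hD0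
  have hD1' : Commute w (D (- -1)) := by rw [neg_neg]; exact hD1
  unfold Lm10 Du
  exact hmi1.mul_right
    (Commute.sub_right
      (hm2.mul_right (hx2.mul_right (hD0'.smul_right _)))
      (hx0.mul_right (hD1'.smul_right _)))

lemma commute_LP {w : A} {k : ℤ}
    (hw : ∀ j : ℤ, Supp k j →
      Commute w (χ j) ∧ Commute w (D j) ∧ Commute w (m j) ∧ Commute w (mi j)) :
    Commute w (LP N p χ D m mi k) := by
  unfold LP
  split
  · next hk =>
      obtain ⟨-, rfl⟩ := hk
      exact h.commute_L01 hw
  · exact h.commute_Lpos hw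

lemma commute_LN {w : A} {k : ℤ}
    (hw : ∀ j : ℤ, Supp k j →
      Commute w (χ j) ∧ Commute w (D j) ∧ Commute w (m j) ∧ Commute w (mi j)) :
    Commute w (LN N p χ D m mi k) := by
  unfold LN
  split
  · next hk =>
      obtain ⟨-, rfl⟩ := hk
      exact h.commute_Lm10 hw
  · exact h.commute_Lneg hw

lemma commute_L12 {w : A}
    (hw : ∀ j : ℤ, Supp 2 j →
      Commute w (χ j) ∧ Commute w (D j) ∧ Commute w (m j) ∧ Commute w (mi j)) :
    Commute w (L12 N p χ D m mi) := by
  obtain ⟨hx2, hD2, hm2, hmi2⟩ := hw 2 (Or.inl rfl)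
  obtain ⟨hx2n, hD2n, hm2n, hmi2n⟩ := hw (-2) (Or.inr (Or.inl rfl))
  obtain ⟨hx1, hD1, hm1, hmi1⟩ := hw 1 (Or.inr (Or.inr (Or.inl (by norm_num))))
  obtain ⟨hx1n, hD1n, hm1n, hmi1n⟩ := hw (-1) (Or.inr (Or.inr (Or.inr (by norm_num))))
  unfold L12 Du
  exact hmi2.mul_right
    (Commute.sub_right
      (Commute.smul_right
        (((hm2n.mul_right hm1n).mul_right hmi1).mul_right
          (hx1.mul_right (hD2n.smul_right _))) _)
      (hx2.mul_right (hD1n.smul_right _)))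

lemma commute_Lm2m1 {w : A}
    (hw : ∀ j : ℤ, Supp 2 j →
      Commute w (χ j) ∧ Commute w (D j) ∧ Commute w (m j) ∧ Commute w (mi j)) :
    Commute w (Lm2m1 N p χ D m mi) := by
  obtain ⟨hx2, hD2, hm2, hmi2⟩ := hw 2 (Or.inl rfl)
  obtain ⟨hx2n, hD2n, hm2n, hmi2n⟩ := hw (-2) (Or.inr (Or.inl rfl))
  obtain ⟨hx1, hD1, hm1, hmi1⟩ := hw 1 (Or.inr (Or.inr (Or.inl (by norm_num))))
  obtain ⟨hx1n, hD1n, hm1n, hmi1n⟩ := hw (-1) (Or.inr (Or.inr (Or.inr (by norm_num))))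
  have hD1' : Commute w (D (- -1)) := by rw [neg_neg]; exact hD1
  have hD2' : Commute w (D (- -2)) := by rw [neg_neg]; exact hD2
  unfold Lm2m1 Du
  exact hmi2.mul_right
    (Commute.sub_right
      (Commute.smul_right
        (((hm2n.mul_right hm1n).mul_right hmi1).mul_right
          (hx2n.mul_right (hD1'.smul_right _))) _)
      (hx1n.mul_right (hD2'.smul_right _)))

lemma mu_pos {i : ℤ} (hi : i ∈ idx N) (hpos : 0 < i ∨ (N % 2 = 0 ∧ i = -1)) :
    m i = mi i + ((p ^ 4 - 1 : K)) • (mi i * (χ i * D i)) := by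
  have hs := h.m_sq_pos i hi hpos
  have h2 := (h.m_inv i).2
  calc m i = mi i * m i * m i := by rw [h2, one_mul]
    _ = mi i * (m i * m i) := by rw [mul_assoc]
    _ = mi i * (m i ^ 2) := by rw [sq]
    _ = mi i * (1 + (p ^ 4 - 1 : K) • (χ i * D i)) := by rw [hs]
    _ = mi i + (p ^ 4 - 1 : K) • (mi i * (χ i * D i)) := by
        rw [mul_add, mul_one, mul_smul_comm]

end Decoupled

end Helpers
set_option maxHeartbeats 4000000 in
/-- distant Chevalley generators commute (Serre-type relations). -/
theorem distant_chevalley_commute [CharZero K] (N : ℕ) (hN : 3 ≤ N) (p : K) (hp : p ≠ 0)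
    (hpu : ∀ k : ℕ, k ≠ 0 → p ^ k ≠ 1)
    (χ D m mi : ℤ → A) (h : Decoupled N p χ D m mi) :
    -- (i)
    (∀ mm kk : ℤ, (if N % 2 = 1 then 1 else 3) ≤ mm → mm ≤ (N / 2 : ℕ) →
        (if N % 2 = 1 then 1 else 3) ≤ kk → kk ≤ (N / 2 : ℕ) → 1 < |mm - kk| →
      LP N p χ D m mi mm * LP N p χ D m mi kk = LP N p χ D m mi kk * LP N p χ D m mi mm ∧
      LN N p χ D m mi mm * LN N p χ D m mi kk = LN N p χ D m mi kk * LN N p χ D m mi mm) ∧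
    -- (ii)
    (N % 2 = 0 →
      (∀ j : ℤ, 4 ≤ j → j ≤ (N / 2 : ℕ) →
        L12 N p χ D m mi * Lpos N p χ D m mi j = Lpos N p χ D m mi j * L12 N p χ D m mi ∧
        Lm2m1 N p χ D m mi * Lneg N p χ D m mi j =
          Lneg N p χ D m mi j * Lm2m1 N p χ D m mi) ∧
      L12 N p χ D m mi * Lm12 N p χ D m mi = Lm12 N p χ D m mi * L12 N p χ D m mi ∧
      Lm2m1 N p χ D m mi * Lm21 N p χ D m mi = Lm21 N p χ D m mi * Lm2m1 N p χ D m mi) := by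
  constructor
  · -- part (i)
    intro mm kk hm1 hm2 hk1 hk2 habs
    have hmm1 : 1 ≤ mm := by split at hm1 <;> omega
    have hkk1 : 1 ≤ kk := by split at hk1 <;> omega
    have habs' : mm + 2 ≤ kk ∨ kk + 2 ≤ mm := by
      rcases abs_cases (mm - kk) with ⟨he, _⟩ | ⟨he, _⟩ <;> omega
    have hdisj : ∀ i j : ℤ, Decoupled.Supp mm i → Decoupled.Supp kk j → j ≠ i := by
      intro i j hi hj
      rcases hi with rfl | rfl | rfl | rfl <;> rcases hj with rfl | rfl | rfl | rfl <;> omega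
    have packP : ∀ j : ℤ, Decoupled.Supp kk j →
        Commute (LP N p χ D m mi mm) (χ j) ∧ Commute (LP N p χ D m mi mm) (D j) ∧
        Commute (LP N p χ D m mi mm) (m j) ∧ Commute (LP N p χ D m mi mm) (mi j) := by
      intro j hj
      exact ⟨(h.commute_LP fun i hi =>
          h.letter_pack (hdisj i j hi hj) (χ j) (Or.inl rfl)).symm,
        (h.commute_LP fun i hi =>
          h.letter_pack (hdisj i j hi hj) (D j) (Or.inr (Or.inl rfl))).symm,
        (h.commute_LP fun i hi =>
          h.letter_pack (hdisj i j hi hj) (m j) (Or.inr (Or.inr (Or.inl rfl)))).symm,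
        (h.commute_LP fun i hi =>
          h.letter_pack (hdisj i j hi hj) (mi j) (Or.inr (Or.inr (Or.inr rfl)))).symm⟩
    have packN : ∀ j : ℤ, Decoupled.Supp kk j →
        Commute (LN N p χ D m mi mm) (χ j) ∧ Commute (LN N p χ D m mi mm) (D j) ∧
        Commute (LN N p χ D m mi mm) (m j) ∧ Commute (LN N p χ D m mi mm) (mi j) := by
      intro j hj
      exact ⟨(h.commute_LN fun i hi =>
          h.letter_pack (hdisj i j hi hj) (χ j) (Or.inl rfl)).symm,
        (h.commute_LN fun i hi =>
          h.letter_pack (hdisj i j hi hj) (D j) (Or.inr (Or.inl rfl))).symm,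
        (h.commute_LN fun i hi =>
          h.letter_pack (hdisj i j hi hj) (m j) (Or.inr (Or.inr (Or.inl rfl)))).symm,
        (h.commute_LN fun i hi =>
          h.letter_pack (hdisj i j hi hj) (mi j) (Or.inr (Or.inr (Or.inr rfl)))).symm⟩
    exact ⟨(h.commute_LP packP).eq, (h.commute_LN packN).eq⟩
  · -- part (ii)
    intro hNe
    refine ⟨?_, ?_, ?_⟩
    · intro j hj1 hj2
      have hdisj : ∀ i j' : ℤ, Decoupled.Supp 2 i → Decoupled.Supp j j' → j' ≠ i := by
        intro i j' hi hj'
        rcases hi with rfl | rfl | rfl | rfl <;> rcases hj' with rfl | rfl | rfl | rfl <;>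
          norm_num <;> omega
      have pack1 : ∀ j' : ℤ, Decoupled.Supp j j' →
          Commute (L12 N p χ D m mi) (χ j') ∧ Commute (L12 N p χ D m mi) (D j') ∧
          Commute (L12 N p χ D m mi) (m j') ∧ Commute (L12 N p χ D m mi) (mi j') := by
        intro j' hj'
        exact ⟨(h.commute_L12 fun i hi =>
            h.letter_pack (hdisj i j' hi hj') (χ j') (Or.inl rfl)).symm,
          (h.commute_L12 fun i hi =>
            h.letter_pack (hdisj i j' hi hj') (D j') (Or.inr (Or.inl rfl))).symm,
          (h.commute_L12 fun i hi =>
            h.letter_pack (hdisj i j' hi hj') (m j') (Or.inr (Or.inr (Or.inl rfl)))).symm,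
          (h.commute_L12 fun i hi =>
            h.letter_pack (hdisj i j' hi hj') (mi j') (Or.inr (Or.inr (Or.inr rfl)))).symm⟩
      have pack2 : ∀ j' : ℤ, Decoupled.Supp j j' →
          Commute (Lm2m1 N p χ D m mi) (χ j') ∧ Commute (Lm2m1 N p χ D m mi) (D j') ∧
          Commute (Lm2m1 N p χ D m mi) (m j') ∧ Commute (Lm2m1 N p χ D m mi) (mi j') := by
        intro j' hj'
        exact ⟨(h.commute_Lm2m1 fun i hi =>
            h.letter_pack (hdisj i j' hi hj') (χ j') (Or.inl rfl)).symm,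
          (h.commute_Lm2m1 fun i hi =>
            h.letter_pack (hdisj i j' hi hj') (D j') (Or.inr (Or.inl rfl))).symm,
          (h.commute_Lm2m1 fun i hi =>
            h.letter_pack (hdisj i j' hi hj') (m j') (Or.inr (Or.inr (Or.inl rfl)))).symm,
          (h.commute_Lm2m1 fun i hi =>
            h.letter_pack (hdisj i j' hi hj') (mi j') (Or.inr (Or.inr (Or.inr rfl)))).symm⟩
      exact ⟨(h.commute_Lpos pack1).eq, (h.commute_Lneg pack2).eq⟩
    · -- [L12, Lm12] = 0
      have hNZ : (N : ℤ) % 2 = 0 := by omega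
      have r1 : rho2 N 1 = 0 := by norm_num [rho2, hNZ]
      have r2 : rho2 N 2 = -2 := by norm_num [rho2, hNZ]
      have rm1 : rho2 N (-1) = 0 := by norm_num [rho2, hNZ]
      have rm2 : rho2 N (-2) = 2 := by norm_num [rho2, hNZ]
      have h1idx : (1 : ℤ) ∈ idx N := by simp [idx]; omega
      have hm1idx : (-1 : ℤ) ∈ idx N := by simp [idx]; omega
      have hmu1 : m 1 = mi 1 + ((p ^ 4 - 1 : K)) • (mi 1 * (χ 1 * D 1)) :=
        h.mu_pos h1idx (Or.inl one_pos)
      have hmum1 : m (-1) = mi (-1) + ((p ^ 4 - 1 : K)) • (mi (-1) * (χ (-1) * D (-1))) :=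
        h.mu_pos hm1idx (Or.inr ⟨hNe, rfl⟩)
      have q_D1_x1 : D 1 * χ 1 = 1 + (p ^ 4 : K) • (χ 1 * D 1) := by
        simpa [aPow] using h.Dx 1 h1idx
      have ql_D1_x1 := lift_exp q_D1_x1
      have q_Dm1_xm1 : D (-1) * χ (-1) = 1 + (p ^ 4 : K) • (χ (-1) * D (-1)) := by
        simpa [aPow, hNe] using h.Dx (-1) hm1idx
      have ql_Dm1_xm1 := lift_exp q_Dm1_xm1
      have t3 : m (-1) * χ (-1) = (p ^ 2 : K) • (χ (-1) * m (-1)) := by simpa using h.m_x (-1) (-1)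
      have q_xm1_mim1 : χ (-1) * mi (-1) = (p ^ 2 : K) • (mi (-1) * χ (-1)) := h.conj_mi t3
      have ql_xm1_mim1 := lift_scal q_xm1_mim1
      have t4 : m (-1) * D (-1) = (p ^ (-2 : ℤ) : K) • (D (-1) * m (-1)) := by
        simpa using h.m_D (-1) (-1)
      have q_Dm1_mim1 : D (-1) * mi (-1) = (p ^ (-2 : ℤ) : K) • (mi (-1) * D (-1)) := h.conj_mi t4
      have ql_Dm1_mim1 := lift_scal q_Dm1_mim1
      have t5 : m 1 * χ 1 = (p ^ 2 : K) • (χ 1 * m 1) := by simpa using h.m_x 1 1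
      have q_x1_mi1 : χ 1 * mi 1 = (p ^ 2 : K) • (mi 1 * χ 1) := h.conj_mi t5
      have ql_x1_mi1 := lift_scal q_x1_mi1
      have t6 : m 1 * D 1 = (p ^ (-2 : ℤ) : K) • (D 1 * m 1) := by simpa using h.m_D 1 1
      have q_D1_mi1 : D 1 * mi 1 = (p ^ (-2 : ℤ) : K) • (mi 1 * D 1) := h.conj_mi t6
      have ql_D1_mi1 := lift_scal q_D1_mi1
      have eL12 : L12 N p χ D m mi =
          (p ^ (-2 : ℤ)) • (mi 2 * (m (-2) * (m (-1) * (mi 1 * (χ 1 * D (-2)))))) -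
            mi 2 * (χ 2 * D (-1)) := by
        unfold L12 Du
        rw [r1, r2]
        norm_num [mul_sub, mul_assoc, mul_smul_comm, smul_smul, ← zpow_add₀ hp]
        congr 1
        simp only [← zpow_natCast, ← zpow_neg, ← zpow_add₀ hp]; norm_num
      have eLm12 : Lm12 N p χ D m mi =
          (p ^ (-2 : ℤ)) • (mi 2 * (m (-2) * (m 1 * (mi (-1) * (χ (-1) * D (-2)))))) -
            mi 2 * (χ 2 * D 1) := by
        unfold Lm12 Du
        rw [rm1, r2]
        norm_num [mul_sub, mul_assoc, mul_smul_comm, smul_smul, ← zpow_add₀ hp]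
        congr 1
        simp only [← zpow_natCast, ← zpow_neg, ← zpow_add₀ hp]; norm_num
      have t1 : m 2 * χ 2 = (p ^ 2 : K) • (χ 2 * m 2) := by simpa using h.m_x 2 2
      have q_x2_mi2 : χ 2 * mi 2 = (p ^ 2 : K) • (mi 2 * χ 2) := h.conj_mi t1
      have ql_x2_mi2 := lift_scal q_x2_mi2
      have t2 : m (-2) * D (-2) = (p ^ (-2 : ℤ) : K) • (D (-2) * m (-2)) := by
        simpa using h.m_D (-2) (-2)
      have q_Dm2_mm2 : D (-2) * m (-2) = (p ^ 2 : K) • (m (-2) * D (-2)) :=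
        rev_scal (by simp only [← zpow_natCast, ← zpow_neg, ← zpow_add₀ hp]; norm_num) t2
      have ql_Dm2_mm2 := lift_scal q_Dm2_mm2
      have s_mi2_mm2 : m (-2) * (mi 2) = mi 2 * (m (-2)) :=
        ((h.letter_pack (by norm_num : (2:ℤ) ≠ (-2)) (mi 2) (Or.inr (Or.inr (Or.inr rfl)))).2.2.1).symm.eq
      have l_mi2_mm2 : ∀ z : A, m (-2) * (mi 2 * z) = mi 2 * (m (-2) * z) :=
        lift_comm ((h.letter_pack (by norm_num : (2:ℤ) ≠ (-2)) (mi 2) (Or.inr (Or.inr (Or.inr rfl)))).2.2.1)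
      have s_mi2_Dm2 : D (-2) * (mi 2) = mi 2 * (D (-2)) :=
        ((h.letter_pack (by norm_num : (2:ℤ) ≠ (-2)) (mi 2) (Or.inr (Or.inr (Or.inr rfl)))).2.1).symm.eq
      have l_mi2_Dm2 : ∀ z : A, D (-2) * (mi 2 * z) = mi 2 * (D (-2) * z) :=
        lift_comm ((h.letter_pack (by norm_num : (2:ℤ) ≠ (-2)) (mi 2) (Or.inr (Or.inr (Or.inr rfl)))).2.1)
      have s_mi2_mim1 : mi (-1) * (mi 2) = mi 2 * (mi (-1)) :=
        ((h.letter_pack (by norm_num : (2:ℤ) ≠ (-1)) (mi 2) (Or.inr (Or.inr (Or.inr rfl)))).2.2.2).symm.eq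
      have l_mi2_mim1 : ∀ z : A, mi (-1) * (mi 2 * z) = mi 2 * (mi (-1) * z) :=
        lift_comm ((h.letter_pack (by norm_num : (2:ℤ) ≠ (-1)) (mi 2) (Or.inr (Or.inr (Or.inr rfl)))).2.2.2)
      have s_mi2_xm1 : χ (-1) * (mi 2) = mi 2 * (χ (-1)) :=
        ((h.letter_pack (by norm_num : (2:ℤ) ≠ (-1)) (mi 2) (Or.inr (Or.inr (Or.inr rfl)))).1).symm.eq
      have l_mi2_xm1 : ∀ z : A, χ (-1) * (mi 2 * z) = mi 2 * (χ (-1) * z) :=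
        lift_comm ((h.letter_pack (by norm_num : (2:ℤ) ≠ (-1)) (mi 2) (Or.inr (Or.inr (Or.inr rfl)))).1)
      have s_mi2_Dm1 : D (-1) * (mi 2) = mi 2 * (D (-1)) :=
        ((h.letter_pack (by norm_num : (2:ℤ) ≠ (-1)) (mi 2) (Or.inr (Or.inr (Or.inr rfl)))).2.1).symm.eq
      have l_mi2_Dm1 : ∀ z : A, D (-1) * (mi 2 * z) = mi 2 * (D (-1) * z) :=
        lift_comm ((h.letter_pack (by norm_num : (2:ℤ) ≠ (-1)) (mi 2) (Or.inr (Or.inr (Or.inr rfl)))).2.1)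
      have s_mi2_mi1 : mi 1 * (mi 2) = mi 2 * (mi 1) :=
        ((h.letter_pack (by norm_num : (2:ℤ) ≠ (1)) (mi 2) (Or.inr (Or.inr (Or.inr rfl)))).2.2.2).symm.eq
      have l_mi2_mi1 : ∀ z : A, mi 1 * (mi 2 * z) = mi 2 * (mi 1 * z) :=
        lift_comm ((h.letter_pack (by norm_num : (2:ℤ) ≠ (1)) (mi 2) (Or.inr (Or.inr (Or.inr rfl)))).2.2.2)
      have s_mi2_x1 : χ 1 * (mi 2) = mi 2 * (χ 1) :=
        ((h.letter_pack (by norm_num : (2:ℤ) ≠ (1)) (mi 2) (Or.inr (Or.inr (Or.inr rfl)))).1).symm.eq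
      have l_mi2_x1 : ∀ z : A, χ 1 * (mi 2 * z) = mi 2 * (χ 1 * z) :=
        lift_comm ((h.letter_pack (by norm_num : (2:ℤ) ≠ (1)) (mi 2) (Or.inr (Or.inr (Or.inr rfl)))).1)
      have s_mi2_D1 : D 1 * (mi 2) = mi 2 * (D 1) :=
        ((h.letter_pack (by norm_num : (2:ℤ) ≠ (1)) (mi 2) (Or.inr (Or.inr (Or.inr rfl)))).2.1).symm.eq
      have l_mi2_D1 : ∀ z : A, D 1 * (mi 2 * z) = mi 2 * (D 1 * z) :=
        lift_comm ((h.letter_pack (by norm_num : (2:ℤ) ≠ (1)) (mi 2) (Or.inr (Or.inr (Or.inr rfl)))).2.1)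
      have s_x2_mm2 : m (-2) * (χ 2) = χ 2 * (m (-2)) :=
        ((h.letter_pack (by norm_num : (2:ℤ) ≠ (-2)) (χ 2) (Or.inl rfl)).2.2.1).symm.eq
      have l_x2_mm2 : ∀ z : A, m (-2) * (χ 2 * z) = χ 2 * (m (-2) * z) :=
        lift_comm ((h.letter_pack (by norm_num : (2:ℤ) ≠ (-2)) (χ 2) (Or.inl rfl)).2.2.1)
      have s_x2_Dm2 : D (-2) * (χ 2) = χ 2 * (D (-2)) :=
        ((h.letter_pack (by norm_num : (2:ℤ) ≠ (-2)) (χ 2) (Or.inl rfl)).2.1).symm.eq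
      have l_x2_Dm2 : ∀ z : A, D (-2) * (χ 2 * z) = χ 2 * (D (-2) * z) :=
        lift_comm ((h.letter_pack (by norm_num : (2:ℤ) ≠ (-2)) (χ 2) (Or.inl rfl)).2.1)
      have s_x2_mim1 : mi (-1) * (χ 2) = χ 2 * (mi (-1)) :=
        ((h.letter_pack (by norm_num : (2:ℤ) ≠ (-1)) (χ 2) (Or.inl rfl)).2.2.2).symm.eq
      have l_x2_mim1 : ∀ z : A, mi (-1) * (χ 2 * z) = χ 2 * (mi (-1) * z) :=
        lift_comm ((h.letter_pack (by norm_num : (2:ℤ) ≠ (-1)) (χ 2) (Or.inl rfl)).2.2.2)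
      have s_x2_xm1 : χ (-1) * (χ 2) = χ 2 * (χ (-1)) :=
        ((h.letter_pack (by norm_num : (2:ℤ) ≠ (-1)) (χ 2) (Or.inl rfl)).1).symm.eq
      have l_x2_xm1 : ∀ z : A, χ (-1) * (χ 2 * z) = χ 2 * (χ (-1) * z) :=
        lift_comm ((h.letter_pack (by norm_num : (2:ℤ) ≠ (-1)) (χ 2) (Or.inl rfl)).1)
      have s_x2_Dm1 : D (-1) * (χ 2) = χ 2 * (D (-1)) :=
        ((h.letter_pack (by norm_num : (2:ℤ) ≠ (-1)) (χ 2) (Or.inl rfl)).2.1).symm.eq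
      have l_x2_Dm1 : ∀ z : A, D (-1) * (χ 2 * z) = χ 2 * (D (-1) * z) :=
        lift_comm ((h.letter_pack (by norm_num : (2:ℤ) ≠ (-1)) (χ 2) (Or.inl rfl)).2.1)
      have s_x2_mi1 : mi 1 * (χ 2) = χ 2 * (mi 1) :=
        ((h.letter_pack (by norm_num : (2:ℤ) ≠ (1)) (χ 2) (Or.inl rfl)).2.2.2).symm.eq
      have l_x2_mi1 : ∀ z : A, mi 1 * (χ 2 * z) = χ 2 * (mi 1 * z) :=
        lift_comm ((h.letter_pack (by norm_num : (2:ℤ) ≠ (1)) (χ 2) (Or.inl rfl)).2.2.2)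
      have s_x2_x1 : χ 1 * (χ 2) = χ 2 * (χ 1) :=
        ((h.letter_pack (by norm_num : (2:ℤ) ≠ (1)) (χ 2) (Or.inl rfl)).1).symm.eq
      have l_x2_x1 : ∀ z : A, χ 1 * (χ 2 * z) = χ 2 * (χ 1 * z) :=
        lift_comm ((h.letter_pack (by norm_num : (2:ℤ) ≠ (1)) (χ 2) (Or.inl rfl)).1)
      have s_x2_D1 : D 1 * (χ 2) = χ 2 * (D 1) :=
        ((h.letter_pack (by norm_num : (2:ℤ) ≠ (1)) (χ 2) (Or.inl rfl)).2.1).symm.eq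
      have l_x2_D1 : ∀ z : A, D 1 * (χ 2 * z) = χ 2 * (D 1 * z) :=
        lift_comm ((h.letter_pack (by norm_num : (2:ℤ) ≠ (1)) (χ 2) (Or.inl rfl)).2.1)
      have s_mm2_mim1 : mi (-1) * (m (-2)) = m (-2) * (mi (-1)) :=
        ((h.letter_pack (by norm_num : (-2:ℤ) ≠ (-1)) (m (-2)) (Or.inr (Or.inr (Or.inl rfl)))).2.2.2).symm.eq
      have l_mm2_mim1 : ∀ z : A, mi (-1) * (m (-2) * z) = m (-2) * (mi (-1) * z) :=
        lift_comm ((h.letter_pack (by norm_num : (-2:ℤ) ≠ (-1)) (m (-2)) (Or.inr (Or.inr (Or.inl rfl)))).2.2.2)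
      have s_mm2_xm1 : χ (-1) * (m (-2)) = m (-2) * (χ (-1)) :=
        ((h.letter_pack (by norm_num : (-2:ℤ) ≠ (-1)) (m (-2)) (Or.inr (Or.inr (Or.inl rfl)))).1).symm.eq
      have l_mm2_xm1 : ∀ z : A, χ (-1) * (m (-2) * z) = m (-2) * (χ (-1) * z) :=
        lift_comm ((h.letter_pack (by norm_num : (-2:ℤ) ≠ (-1)) (m (-2)) (Or.inr (Or.inr (Or.inl rfl)))).1)
      have s_mm2_Dm1 : D (-1) * (m (-2)) = m (-2) * (D (-1)) :=
        ((h.letter_pack (by norm_num : (-2:ℤ) ≠ (-1)) (m (-2)) (Or.inr (Or.inr (Or.inl rfl)))).2.1).symm.eq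
      have l_mm2_Dm1 : ∀ z : A, D (-1) * (m (-2) * z) = m (-2) * (D (-1) * z) :=
        lift_comm ((h.letter_pack (by norm_num : (-2:ℤ) ≠ (-1)) (m (-2)) (Or.inr (Or.inr (Or.inl rfl)))).2.1)
      have s_mm2_mi1 : mi 1 * (m (-2)) = m (-2) * (mi 1) :=
        ((h.letter_pack (by norm_num : (-2:ℤ) ≠ (1)) (m (-2)) (Or.inr (Or.inr (Or.inl rfl)))).2.2.2).symm.eq
      have l_mm2_mi1 : ∀ z : A, mi 1 * (m (-2) * z) = m (-2) * (mi 1 * z) :=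
        lift_comm ((h.letter_pack (by norm_num : (-2:ℤ) ≠ (1)) (m (-2)) (Or.inr (Or.inr (Or.inl rfl)))).2.2.2)
      have s_mm2_x1 : χ 1 * (m (-2)) = m (-2) * (χ 1) :=
        ((h.letter_pack (by norm_num : (-2:ℤ) ≠ (1)) (m (-2)) (Or.inr (Or.inr (Or.inl rfl)))).1).symm.eq
      have l_mm2_x1 : ∀ z : A, χ 1 * (m (-2) * z) = m (-2) * (χ 1 * z) :=
        lift_comm ((h.letter_pack (by norm_num : (-2:ℤ) ≠ (1)) (m (-2)) (Or.inr (Or.inr (Or.inl rfl)))).1)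
      have s_mm2_D1 : D 1 * (m (-2)) = m (-2) * (D 1) :=
        ((h.letter_pack (by norm_num : (-2:ℤ) ≠ (1)) (m (-2)) (Or.inr (Or.inr (Or.inl rfl)))).2.1).symm.eq
      have l_mm2_D1 : ∀ z : A, D 1 * (m (-2) * z) = m (-2) * (D 1 * z) :=
        lift_comm ((h.letter_pack (by norm_num : (-2:ℤ) ≠ (1)) (m (-2)) (Or.inr (Or.inr (Or.inl rfl)))).2.1)
      have s_Dm2_mim1 : mi (-1) * (D (-2)) = D (-2) * (mi (-1)) :=
        ((h.letter_pack (by norm_num : (-2:ℤ) ≠ (-1)) (D (-2)) (Or.inr (Or.inl rfl))).2.2.2).symm.eq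
      have l_Dm2_mim1 : ∀ z : A, mi (-1) * (D (-2) * z) = D (-2) * (mi (-1) * z) :=
        lift_comm ((h.letter_pack (by norm_num : (-2:ℤ) ≠ (-1)) (D (-2)) (Or.inr (Or.inl rfl))).2.2.2)
      have s_Dm2_xm1 : χ (-1) * (D (-2)) = D (-2) * (χ (-1)) :=
        ((h.letter_pack (by norm_num : (-2:ℤ) ≠ (-1)) (D (-2)) (Or.inr (Or.inl rfl))).1).symm.eq
      have l_Dm2_xm1 : ∀ z : A, χ (-1) * (D (-2) * z) = D (-2) * (χ (-1) * z) :=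
        lift_comm ((h.letter_pack (by norm_num : (-2:ℤ) ≠ (-1)) (D (-2)) (Or.inr (Or.inl rfl))).1)
      have s_Dm2_Dm1 : D (-1) * (D (-2)) = D (-2) * (D (-1)) :=
        ((h.letter_pack (by norm_num : (-2:ℤ) ≠ (-1)) (D (-2)) (Or.inr (Or.inl rfl))).2.1).symm.eq
      have l_Dm2_Dm1 : ∀ z : A, D (-1) * (D (-2) * z) = D (-2) * (D (-1) * z) :=
        lift_comm ((h.letter_pack (by norm_num : (-2:ℤ) ≠ (-1)) (D (-2)) (Or.inr (Or.inl rfl))).2.1)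
      have s_Dm2_mi1 : mi 1 * (D (-2)) = D (-2) * (mi 1) :=
        ((h.letter_pack (by norm_num : (-2:ℤ) ≠ (1)) (D (-2)) (Or.inr (Or.inl rfl))).2.2.2).symm.eq
      have l_Dm2_mi1 : ∀ z : A, mi 1 * (D (-2) * z) = D (-2) * (mi 1 * z) :=
        lift_comm ((h.letter_pack (by norm_num : (-2:ℤ) ≠ (1)) (D (-2)) (Or.inr (Or.inl rfl))).2.2.2)
      have s_Dm2_x1 : χ 1 * (D (-2)) = D (-2) * (χ 1) :=
        ((h.letter_pack (by norm_num : (-2:ℤ) ≠ (1)) (D (-2)) (Or.inr (Or.inl rfl))).1).symm.eq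
      have l_Dm2_x1 : ∀ z : A, χ 1 * (D (-2) * z) = D (-2) * (χ 1 * z) :=
        lift_comm ((h.letter_pack (by norm_num : (-2:ℤ) ≠ (1)) (D (-2)) (Or.inr (Or.inl rfl))).1)
      have s_Dm2_D1 : D 1 * (D (-2)) = D (-2) * (D 1) :=
        ((h.letter_pack (by norm_num : (-2:ℤ) ≠ (1)) (D (-2)) (Or.inr (Or.inl rfl))).2.1).symm.eq
      have l_Dm2_D1 : ∀ z : A, D 1 * (D (-2) * z) = D (-2) * (D 1 * z) :=
        lift_comm ((h.letter_pack (by norm_num : (-2:ℤ) ≠ (1)) (D (-2)) (Or.inr (Or.inl rfl))).2.1)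
      have s_mim1_mi1 : mi 1 * (mi (-1)) = mi (-1) * (mi 1) :=
        ((h.letter_pack (by norm_num : (-1:ℤ) ≠ (1)) (mi (-1)) (Or.inr (Or.inr (Or.inr rfl)))).2.2.2).symm.eq
      have l_mim1_mi1 : ∀ z : A, mi 1 * (mi (-1) * z) = mi (-1) * (mi 1 * z) :=
        lift_comm ((h.letter_pack (by norm_num : (-1:ℤ) ≠ (1)) (mi (-1)) (Or.inr (Or.inr (Or.inr rfl)))).2.2.2)
      have s_mim1_x1 : χ 1 * (mi (-1)) = mi (-1) * (χ 1) :=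
        ((h.letter_pack (by norm_num : (-1:ℤ) ≠ (1)) (mi (-1)) (Or.inr (Or.inr (Or.inr rfl)))).1).symm.eq
      have l_mim1_x1 : ∀ z : A, χ 1 * (mi (-1) * z) = mi (-1) * (χ 1 * z) :=
        lift_comm ((h.letter_pack (by norm_num : (-1:ℤ) ≠ (1)) (mi (-1)) (Or.inr (Or.inr (Or.inr rfl)))).1)
      have s_mim1_D1 : D 1 * (mi (-1)) = mi (-1) * (D 1) :=
        ((h.letter_pack (by norm_num : (-1:ℤ) ≠ (1)) (mi (-1)) (Or.inr (Or.inr (Or.inr rfl)))).2.1).symm.eq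
      have l_mim1_D1 : ∀ z : A, D 1 * (mi (-1) * z) = mi (-1) * (D 1 * z) :=
        lift_comm ((h.letter_pack (by norm_num : (-1:ℤ) ≠ (1)) (mi (-1)) (Or.inr (Or.inr (Or.inr rfl)))).2.1)
      have s_xm1_mi1 : mi 1 * (χ (-1)) = χ (-1) * (mi 1) :=
        ((h.letter_pack (by norm_num : (-1:ℤ) ≠ (1)) (χ (-1)) (Or.inl rfl)).2.2.2).symm.eq
      have l_xm1_mi1 : ∀ z : A, mi 1 * (χ (-1) * z) = χ (-1) * (mi 1 * z) :=
        lift_comm ((h.letter_pack (by norm_num : (-1:ℤ) ≠ (1)) (χ (-1)) (Or.inl rfl)).2.2.2)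
      have s_xm1_x1 : χ 1 * (χ (-1)) = χ (-1) * (χ 1) :=
        ((h.letter_pack (by norm_num : (-1:ℤ) ≠ (1)) (χ (-1)) (Or.inl rfl)).1).symm.eq
      have l_xm1_x1 : ∀ z : A, χ 1 * (χ (-1) * z) = χ (-1) * (χ 1 * z) :=
        lift_comm ((h.letter_pack (by norm_num : (-1:ℤ) ≠ (1)) (χ (-1)) (Or.inl rfl)).1)
      have s_xm1_D1 : D 1 * (χ (-1)) = χ (-1) * (D 1) :=
        ((h.letter_pack (by norm_num : (-1:ℤ) ≠ (1)) (χ (-1)) (Or.inl rfl)).2.1).symm.eq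
      have l_xm1_D1 : ∀ z : A, D 1 * (χ (-1) * z) = χ (-1) * (D 1 * z) :=
        lift_comm ((h.letter_pack (by norm_num : (-1:ℤ) ≠ (1)) (χ (-1)) (Or.inl rfl)).2.1)
      have s_Dm1_mi1 : mi 1 * (D (-1)) = D (-1) * (mi 1) :=
        ((h.letter_pack (by norm_num : (-1:ℤ) ≠ (1)) (D (-1)) (Or.inr (Or.inl rfl))).2.2.2).symm.eq
      have l_Dm1_mi1 : ∀ z : A, mi 1 * (D (-1) * z) = D (-1) * (mi 1 * z) :=
        lift_comm ((h.letter_pack (by norm_num : (-1:ℤ) ≠ (1)) (D (-1)) (Or.inr (Or.inl rfl))).2.2.2)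
      have s_Dm1_x1 : χ 1 * (D (-1)) = D (-1) * (χ 1) :=
        ((h.letter_pack (by norm_num : (-1:ℤ) ≠ (1)) (D (-1)) (Or.inr (Or.inl rfl))).1).symm.eq
      have l_Dm1_x1 : ∀ z : A, χ 1 * (D (-1) * z) = D (-1) * (χ 1 * z) :=
        lift_comm ((h.letter_pack (by norm_num : (-1:ℤ) ≠ (1)) (D (-1)) (Or.inr (Or.inl rfl))).1)
      have s_Dm1_D1 : D 1 * (D (-1)) = D (-1) * (D 1) :=
        ((h.letter_pack (by norm_num : (-1:ℤ) ≠ (1)) (D (-1)) (Or.inr (Or.inl rfl))).2.1).symm.eq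
      have l_Dm1_D1 : ∀ z : A, D 1 * (D (-1) * z) = D (-1) * (D 1 * z) :=
        lift_comm ((h.letter_pack (by norm_num : (-1:ℤ) ≠ (1)) (D (-1)) (Or.inr (Or.inl rfl))).2.1)
      rw [eL12, eLm12, hmu1, hmum1]
      simp only [mul_add, add_mul, mul_sub, sub_mul, smul_add, smul_sub, smul_mul_assoc,
        mul_smul_comm, smul_smul, mul_assoc, mul_one, one_mul,
        q_x2_mi2, ql_x2_mi2, q_Dm2_mm2, ql_Dm2_mm2, q_D1_x1, ql_D1_x1, q_Dm1_xm1, ql_Dm1_xm1, q_xm1_mim1, ql_xm1_mim1, q_Dm1_mim1, ql_Dm1_mim1, q_x1_mi1, ql_x1_mi1, q_D1_mi1, ql_D1_mi1,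
        s_mi2_mm2, l_mi2_mm2, s_mi2_Dm2, l_mi2_Dm2, s_mi2_mim1, l_mi2_mim1, s_mi2_xm1, l_mi2_xm1, s_mi2_Dm1, l_mi2_Dm1, s_mi2_mi1, l_mi2_mi1, s_mi2_x1, l_mi2_x1, s_mi2_D1, l_mi2_D1, s_x2_mm2, l_x2_mm2, s_x2_Dm2, l_x2_Dm2, s_x2_mim1, l_x2_mim1, s_x2_xm1, l_x2_xm1, s_x2_Dm1, l_x2_Dm1, s_x2_mi1, l_x2_mi1, s_x2_x1, l_x2_x1, s_x2_D1, l_x2_D1, s_mm2_mim1, l_mm2_mim1, s_mm2_xm1, l_mm2_xm1, s_mm2_Dm1, l_mm2_Dm1, s_mm2_mi1, l_mm2_mi1, s_mm2_x1, l_mm2_x1, s_mm2_D1, l_mm2_D1, s_Dm2_mim1, l_Dm2_mim1, s_Dm2_xm1, l_Dm2_xm1, s_Dm2_Dm1, l_Dm2_Dm1, s_Dm2_mi1, l_Dm2_mi1, s_Dm2_x1, l_Dm2_x1, s_Dm2_D1, l_Dm2_D1, s_mim1_mi1, l_mim1_mi1, s_mim1_x1, l_mim1_x1, s_mim1_D1,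 l_mim1_D1, s_xm1_mi1, l_xm1_mi1, s_xm1_x1, l_xm1_x1, s_xm1_D1, l_xm1_D1, s_Dm1_mi1, l_Dm1_mi1, s_Dm1_x1, l_Dm1_x1, s_Dm1_D1, l_Dm1_D1]
      match_scalars <;> (simp only [← zpow_natCast, ← zpow_neg, ← zpow_add₀ hp]; try norm_num; try ring)
    · -- [Lm2m1, Lm21] = 0
      have hNZ : (N : ℤ) % 2 = 0 := by omega
      have r1 : rho2 N 1 = 0 := by norm_num [rho2, hNZ]
      have r2 : rho2 N 2 = -2 := by norm_num [rho2, hNZ]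
      have rm1 : rho2 N (-1) = 0 := by norm_num [rho2, hNZ]
      have rm2 : rho2 N (-2) = 2 := by norm_num [rho2, hNZ]
      have h1idx : (1 : ℤ) ∈ idx N := by simp [idx]; omega
      have hm1idx : (-1 : ℤ) ∈ idx N := by simp [idx]; omega
      have hmu1 : m 1 = mi 1 + ((p ^ 4 - 1 : K)) • (mi 1 * (χ 1 * D 1)) :=
        h.mu_pos h1idx (Or.inl one_pos)
      have hmum1 : m (-1) = mi (-1) + ((p ^ 4 - 1 : K)) • (mi (-1) * (χ (-1) * D (-1))) :=
        h.mu_pos hm1idx (Or.inr ⟨hNe, rfl⟩)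
      have q_D1_x1 : D 1 * χ 1 = 1 + (p ^ 4 : K) • (χ 1 * D 1) := by
        simpa [aPow] using h.Dx 1 h1idx
      have ql_D1_x1 := lift_exp q_D1_x1
      have q_Dm1_xm1 : D (-1) * χ (-1) = 1 + (p ^ 4 : K) • (χ (-1) * D (-1)) := by
        simpa [aPow, hNe] using h.Dx (-1) hm1idx
      have ql_Dm1_xm1 := lift_exp q_Dm1_xm1
      have t3 : m (-1) * χ (-1) = (p ^ 2 : K) • (χ (-1) * m (-1)) := by simpa using h.m_x (-1) (-1)
      have q_xm1_mim1 : χ (-1) * mi (-1) = (p ^ 2 : K) • (mi (-1) * χ (-1)) := h.conj_mi t3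
      have ql_xm1_mim1 := lift_scal q_xm1_mim1
      have t4 : m (-1) * D (-1) = (p ^ (-2 : ℤ) : K) • (D (-1) * m (-1)) := by
        simpa using h.m_D (-1) (-1)
      have q_Dm1_mim1 : D (-1) * mi (-1) = (p ^ (-2 : ℤ) : K) • (mi (-1) * D (-1)) := h.conj_mi t4
      have ql_Dm1_mim1 := lift_scal q_Dm1_mim1
      have t5 : m 1 * χ 1 = (p ^ 2 : K) • (χ 1 * m 1) := by simpa using h.m_x 1 1
      have q_x1_mi1 : χ 1 * mi 1 = (p ^ 2 : K) • (mi 1 * χ 1) := h.conj_mi t5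
      have ql_x1_mi1 := lift_scal q_x1_mi1
      have t6 : m 1 * D 1 = (p ^ (-2 : ℤ) : K) • (D 1 * m 1) := by simpa using h.m_D 1 1
      have q_D1_mi1 : D 1 * mi 1 = (p ^ (-2 : ℤ) : K) • (mi 1 * D 1) := h.conj_mi t6
      have ql_D1_mi1 := lift_scal q_D1_mi1
      have eLm2m1 : Lm2m1 N p χ D m mi =
          (p ^ (-2 : ℤ)) • (mi 2 * (m (-2) * (m (-1) * (mi 1 * (χ (-2) * D 1))))) -
            (p ^ (-2 : ℤ)) • (mi 2 * (χ (-1) * D 2)) := by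
        unfold Lm2m1 Du
        rw [rm1, rm2]
        norm_num [mul_sub, mul_assoc, mul_smul_comm, smul_smul, ← zpow_add₀ hp]
      have eLm21 : Lm21 N p χ D m mi =
          (p ^ (-2 : ℤ)) • (mi 2 * (m (-2) * (m 1 * (mi (-1) * (χ (-2) * D (-1)))))) -
            (p ^ (-2 : ℤ)) • (mi 2 * (χ 1 * D 2)) := by
        unfold Lm21 Du
        rw [r1, rm2]
        norm_num [mul_sub, mul_assoc, mul_smul_comm, smul_smul, ← zpow_add₀ hp]
      have t1 : m 2 * D 2 = (p ^ (-2 : ℤ) : K) • (D 2 * m 2) := by simpa using h.m_D 2 2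
      have q_D2_mi2 : D 2 * mi 2 = (p ^ (-2 : ℤ) : K) • (mi 2 * D 2) := h.conj_mi t1
      have ql_D2_mi2 := lift_scal q_D2_mi2
      have t2 : m (-2) * χ (-2) = (p ^ 2 : K) • (χ (-2) * m (-2)) := by
        simpa using h.m_x (-2) (-2)
      have q_xm2_mm2 : χ (-2) * m (-2) = (p ^ (-2 : ℤ) : K) • (m (-2) * χ (-2)) :=
        rev_scal (by simp only [← zpow_natCast, ← zpow_neg, ← zpow_add₀ hp]; norm_num) t2
      have ql_xm2_mm2 := lift_scal q_xm2_mm2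
      have s_mi2_mm2 : m (-2) * (mi 2) = mi 2 * (m (-2)) :=
        ((h.letter_pack (by norm_num : (2:ℤ) ≠ (-2)) (mi 2) (Or.inr (Or.inr (Or.inr rfl)))).2.2.1).symm.eq
      have l_mi2_mm2 : ∀ z : A, m (-2) * (mi 2 * z) = mi 2 * (m (-2) * z) :=
        lift_comm ((h.letter_pack (by norm_num : (2:ℤ) ≠ (-2)) (mi 2) (Or.inr (Or.inr (Or.inr rfl)))).2.2.1)
      have s_mi2_xm2 : χ (-2) * (mi 2) = mi 2 * (χ (-2)) :=
        ((h.letter_pack (by norm_num : (2:ℤ) ≠ (-2)) (mi 2) (Or.inr (Or.inr (Or.inr rfl)))).1).symm.eq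
      have l_mi2_xm2 : ∀ z : A, χ (-2) * (mi 2 * z) = mi 2 * (χ (-2) * z) :=
        lift_comm ((h.letter_pack (by norm_num : (2:ℤ) ≠ (-2)) (mi 2) (Or.inr (Or.inr (Or.inr rfl)))).1)
      have s_mi2_mim1 : mi (-1) * (mi 2) = mi 2 * (mi (-1)) :=
        ((h.letter_pack (by norm_num : (2:ℤ) ≠ (-1)) (mi 2) (Or.inr (Or.inr (Or.inr rfl)))).2.2.2).symm.eq
      have l_mi2_mim1 : ∀ z : A, mi (-1) * (mi 2 * z) = mi 2 * (mi (-1) * z) :=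
        lift_comm ((h.letter_pack (by norm_num : (2:ℤ) ≠ (-1)) (mi 2) (Or.inr (Or.inr (Or.inr rfl)))).2.2.2)
      have s_mi2_xm1 : χ (-1) * (mi 2) = mi 2 * (χ (-1)) :=
        ((h.letter_pack (by norm_num : (2:ℤ) ≠ (-1)) (mi 2) (Or.inr (Or.inr (Or.inr rfl)))).1).symm.eq
      have l_mi2_xm1 : ∀ z : A, χ (-1) * (mi 2 * z) = mi 2 * (χ (-1) * z) :=
        lift_comm ((h.letter_pack (by norm_num : (2:ℤ) ≠ (-1)) (mi 2) (Or.inr (Or.inr (Or.inr rfl)))).1)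
      have s_mi2_Dm1 : D (-1) * (mi 2) = mi 2 * (D (-1)) :=
        ((h.letter_pack (by norm_num : (2:ℤ) ≠ (-1)) (mi 2) (Or.inr (Or.inr (Or.inr rfl)))).2.1).symm.eq
      have l_mi2_Dm1 : ∀ z : A, D (-1) * (mi 2 * z) = mi 2 * (D (-1) * z) :=
        lift_comm ((h.letter_pack (by norm_num : (2:ℤ) ≠ (-1)) (mi 2) (Or.inr (Or.inr (Or.inr rfl)))).2.1)
      have s_mi2_mi1 : mi 1 * (mi 2) = mi 2 * (mi 1) :=
        ((h.letter_pack (by norm_num : (2:ℤ) ≠ (1)) (mi 2) (Or.inr (Or.inr (Or.inr rfl)))).2.2.2).symm.eq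
      have l_mi2_mi1 : ∀ z : A, mi 1 * (mi 2 * z) = mi 2 * (mi 1 * z) :=
        lift_comm ((h.letter_pack (by norm_num : (2:ℤ) ≠ (1)) (mi 2) (Or.inr (Or.inr (Or.inr rfl)))).2.2.2)
      have s_mi2_x1 : χ 1 * (mi 2) = mi 2 * (χ 1) :=
        ((h.letter_pack (by norm_num : (2:ℤ) ≠ (1)) (mi 2) (Or.inr (Or.inr (Or.inr rfl)))).1).symm.eq
      have l_mi2_x1 : ∀ z : A, χ 1 * (mi 2 * z) = mi 2 * (χ 1 * z) :=
        lift_comm ((h.letter_pack (by norm_num : (2:ℤ) ≠ (1)) (mi 2) (Or.inr (Or.inr (Or.inr rfl)))).1)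
      have s_mi2_D1 : D 1 * (mi 2) = mi 2 * (D 1) :=
        ((h.letter_pack (by norm_num : (2:ℤ) ≠ (1)) (mi 2) (Or.inr (Or.inr (Or.inr rfl)))).2.1).symm.eq
      have l_mi2_D1 : ∀ z : A, D 1 * (mi 2 * z) = mi 2 * (D 1 * z) :=
        lift_comm ((h.letter_pack (by norm_num : (2:ℤ) ≠ (1)) (mi 2) (Or.inr (Or.inr (Or.inr rfl)))).2.1)
      have s_D2_mm2 : m (-2) * (D 2) = D 2 * (m (-2)) :=
        ((h.letter_pack (by norm_num : (2:ℤ) ≠ (-2)) (D 2) (Or.inr (Or.inl rfl))).2.2.1).symm.eq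
      have l_D2_mm2 : ∀ z : A, m (-2) * (D 2 * z) = D 2 * (m (-2) * z) :=
        lift_comm ((h.letter_pack (by norm_num : (2:ℤ) ≠ (-2)) (D 2) (Or.inr (Or.inl rfl))).2.2.1)
      have s_D2_xm2 : χ (-2) * (D 2) = D 2 * (χ (-2)) :=
        ((h.letter_pack (by norm_num : (2:ℤ) ≠ (-2)) (D 2) (Or.inr (Or.inl rfl))).1).symm.eq
      have l_D2_xm2 : ∀ z : A, χ (-2) * (D 2 * z) = D 2 * (χ (-2) * z) :=
        lift_comm ((h.letter_pack (by norm_num : (2:ℤ) ≠ (-2)) (D 2) (Or.inr (Or.inl rfl))).1)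
      have s_D2_mim1 : mi (-1) * (D 2) = D 2 * (mi (-1)) :=
        ((h.letter_pack (by norm_num : (2:ℤ) ≠ (-1)) (D 2) (Or.inr (Or.inl rfl))).2.2.2).symm.eq
      have l_D2_mim1 : ∀ z : A, mi (-1) * (D 2 * z) = D 2 * (mi (-1) * z) :=
        lift_comm ((h.letter_pack (by norm_num : (2:ℤ) ≠ (-1)) (D 2) (Or.inr (Or.inl rfl))).2.2.2)
      have s_D2_xm1 : χ (-1) * (D 2) = D 2 * (χ (-1)) :=
        ((h.letter_pack (by norm_num : (2:ℤ) ≠ (-1)) (D 2) (Or.inr (Or.inl rfl))).1).symm.eq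
      have l_D2_xm1 : ∀ z : A, χ (-1) * (D 2 * z) = D 2 * (χ (-1) * z) :=
        lift_comm ((h.letter_pack (by norm_num : (2:ℤ) ≠ (-1)) (D 2) (Or.inr (Or.inl rfl))).1)
      have s_D2_Dm1 : D (-1) * (D 2) = D 2 * (D (-1)) :=
        ((h.letter_pack (by norm_num : (2:ℤ) ≠ (-1)) (D 2) (Or.inr (Or.inl rfl))).2.1).symm.eq
      have l_D2_Dm1 : ∀ z : A, D (-1) * (D 2 * z) = D 2 * (D (-1) * z) :=
        lift_comm ((h.letter_pack (by norm_num : (2:ℤ) ≠ (-1)) (D 2) (Or.inr (Or.inl rfl))).2.1)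
      have s_D2_mi1 : mi 1 * (D 2) = D 2 * (mi 1) :=
        ((h.letter_pack (by norm_num : (2:ℤ) ≠ (1)) (D 2) (Or.inr (Or.inl rfl))).2.2.2).symm.eq
      have l_D2_mi1 : ∀ z : A, mi 1 * (D 2 * z) = D 2 * (mi 1 * z) :=
        lift_comm ((h.letter_pack (by norm_num : (2:ℤ) ≠ (1)) (D 2) (Or.inr (Or.inl rfl))).2.2.2)
      have s_D2_x1 : χ 1 * (D 2) = D 2 * (χ 1) :=
        ((h.letter_pack (by norm_num : (2:ℤ) ≠ (1)) (D 2) (Or.inr (Or.inl rfl))).1).symm.eq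
      have l_D2_x1 : ∀ z : A, χ 1 * (D 2 * z) = D 2 * (χ 1 * z) :=
        lift_comm ((h.letter_pack (by norm_num : (2:ℤ) ≠ (1)) (D 2) (Or.inr (Or.inl rfl))).1)
      have s_D2_D1 : D 1 * (D 2) = D 2 * (D 1) :=
        ((h.letter_pack (by norm_num : (2:ℤ) ≠ (1)) (D 2) (Or.inr (Or.inl rfl))).2.1).symm.eq
      have l_D2_D1 : ∀ z : A, D 1 * (D 2 * z) = D 2 * (D 1 * z) :=
        lift_comm ((h.letter_pack (by norm_num : (2:ℤ) ≠ (1)) (D 2) (Or.inr (Or.inl rfl))).2.1)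
      have s_mm2_mim1 : mi (-1) * (m (-2)) = m (-2) * (mi (-1)) :=
        ((h.letter_pack (by norm_num : (-2:ℤ) ≠ (-1)) (m (-2)) (Or.inr (Or.inr (Or.inl rfl)))).2.2.2).symm.eq
      have l_mm2_mim1 : ∀ z : A, mi (-1) * (m (-2) * z) = m (-2) * (mi (-1) * z) :=
        lift_comm ((h.letter_pack (by norm_num : (-2:ℤ) ≠ (-1)) (m (-2)) (Or.inr (Or.inr (Or.inl rfl)))).2.2.2)
      have s_mm2_xm1 : χ (-1) * (m (-2)) = m (-2) * (χ (-1)) :=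
        ((h.letter_pack (by norm_num : (-2:ℤ) ≠ (-1)) (m (-2)) (Or.inr (Or.inr (Or.inl rfl)))).1).symm.eq
      have l_mm2_xm1 : ∀ z : A, χ (-1) * (m (-2) * z) = m (-2) * (χ (-1) * z) :=
        lift_comm ((h.letter_pack (by norm_num : (-2:ℤ) ≠ (-1)) (m (-2)) (Or.inr (Or.inr (Or.inl rfl)))).1)
      have s_mm2_Dm1 : D (-1) * (m (-2)) = m (-2) * (D (-1)) :=
        ((h.letter_pack (by norm_num : (-2:ℤ) ≠ (-1)) (m (-2)) (Or.inr (Or.inr (Or.inl rfl)))).2.1).symm.eq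
      have l_mm2_Dm1 : ∀ z : A, D (-1) * (m (-2) * z) = m (-2) * (D (-1) * z) :=
        lift_comm ((h.letter_pack (by norm_num : (-2:ℤ) ≠ (-1)) (m (-2)) (Or.inr (Or.inr (Or.inl rfl)))).2.1)
      have s_mm2_mi1 : mi 1 * (m (-2)) = m (-2) * (mi 1) :=
        ((h.letter_pack (by norm_num : (-2:ℤ) ≠ (1)) (m (-2)) (Or.inr (Or.inr (Or.inl rfl)))).2.2.2).symm.eq
      have l_mm2_mi1 : ∀ z : A, mi 1 * (m (-2) * z) = m (-2) * (mi 1 * z) :=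
        lift_comm ((h.letter_pack (by norm_num : (-2:ℤ) ≠ (1)) (m (-2)) (Or.inr (Or.inr (Or.inl rfl)))).2.2.2)
      have s_mm2_x1 : χ 1 * (m (-2)) = m (-2) * (χ 1) :=
        ((h.letter_pack (by norm_num : (-2:ℤ) ≠ (1)) (m (-2)) (Or.inr (Or.inr (Or.inl rfl)))).1).symm.eq
      have l_mm2_x1 : ∀ z : A, χ 1 * (m (-2) * z) = m (-2) * (χ 1 * z) :=
        lift_comm ((h.letter_pack (by norm_num : (-2:ℤ) ≠ (1)) (m (-2)) (Or.inr (Or.inr (Or.inl rfl)))).1)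
      have s_mm2_D1 : D 1 * (m (-2)) = m (-2) * (D 1) :=
        ((h.letter_pack (by norm_num : (-2:ℤ) ≠ (1)) (m (-2)) (Or.inr (Or.inr (Or.inl rfl)))).2.1).symm.eq
      have l_mm2_D1 : ∀ z : A, D 1 * (m (-2) * z) = m (-2) * (D 1 * z) :=
        lift_comm ((h.letter_pack (by norm_num : (-2:ℤ) ≠ (1)) (m (-2)) (Or.inr (Or.inr (Or.inl rfl)))).2.1)
      have s_xm2_mim1 : mi (-1) * (χ (-2)) = χ (-2) * (mi (-1)) :=
        ((h.letter_pack (by norm_num : (-2:ℤ) ≠ (-1)) (χ (-2)) (Or.inl rfl)).2.2.2).symm.eq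
      have l_xm2_mim1 : ∀ z : A, mi (-1) * (χ (-2) * z) = χ (-2) * (mi (-1) * z) :=
        lift_comm ((h.letter_pack (by norm_num : (-2:ℤ) ≠ (-1)) (χ (-2)) (Or.inl rfl)).2.2.2)
      have s_xm2_xm1 : χ (-1) * (χ (-2)) = χ (-2) * (χ (-1)) :=
        ((h.letter_pack (by norm_num : (-2:ℤ) ≠ (-1)) (χ (-2)) (Or.inl rfl)).1).symm.eq
      have l_xm2_xm1 : ∀ z : A, χ (-1) * (χ (-2) * z) = χ (-2) * (χ (-1) * z) :=
        lift_comm ((h.letter_pack (by norm_num : (-2:ℤ) ≠ (-1)) (χ (-2)) (Or.inl rfl)).1)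
      have s_xm2_Dm1 : D (-1) * (χ (-2)) = χ (-2) * (D (-1)) :=
        ((h.letter_pack (by norm_num : (-2:ℤ) ≠ (-1)) (χ (-2)) (Or.inl rfl)).2.1).symm.eq
      have l_xm2_Dm1 : ∀ z : A, D (-1) * (χ (-2) * z) = χ (-2) * (D (-1) * z) :=
        lift_comm ((h.letter_pack (by norm_num : (-2:ℤ) ≠ (-1)) (χ (-2)) (Or.inl rfl)).2.1)
      have s_xm2_mi1 : mi 1 * (χ (-2)) = χ (-2) * (mi 1) :=
        ((h.letter_pack (by norm_num : (-2:ℤ) ≠ (1)) (χ (-2)) (Or.inl rfl)).2.2.2).symm.eq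
      have l_xm2_mi1 : ∀ z : A, mi 1 * (χ (-2) * z) = χ (-2) * (mi 1 * z) :=
        lift_comm ((h.letter_pack (by norm_num : (-2:ℤ) ≠ (1)) (χ (-2)) (Or.inl rfl)).2.2.2)
      have s_xm2_x1 : χ 1 * (χ (-2)) = χ (-2) * (χ 1) :=
        ((h.letter_pack (by norm_num : (-2:ℤ) ≠ (1)) (χ (-2)) (Or.inl rfl)).1).symm.eq
      have l_xm2_x1 : ∀ z : A, χ 1 * (χ (-2) * z) = χ (-2) * (χ 1 * z) :=
        lift_comm ((h.letter_pack (by norm_num : (-2:ℤ) ≠ (1)) (χ (-2)) (Or.inl rfl)).1)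
      have s_xm2_D1 : D 1 * (χ (-2)) = χ (-2) * (D 1) :=
        ((h.letter_pack (by norm_num : (-2:ℤ) ≠ (1)) (χ (-2)) (Or.inl rfl)).2.1).symm.eq
      have l_xm2_D1 : ∀ z : A, D 1 * (χ (-2) * z) = χ (-2) * (D 1 * z) :=
        lift_comm ((h.letter_pack (by norm_num : (-2:ℤ) ≠ (1)) (χ (-2)) (Or.inl rfl)).2.1)
      have s_mim1_mi1 : mi 1 * (mi (-1)) = mi (-1) * (mi 1) :=
        ((h.letter_pack (by norm_num : (-1:ℤ) ≠ (1)) (mi (-1)) (Or.inr (Or.inr (Or.inr rfl)))).2.2.2).symm.eq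
      have l_mim1_mi1 : ∀ z : A, mi 1 * (mi (-1) * z) = mi (-1) * (mi 1 * z) :=
        lift_comm ((h.letter_pack (by norm_num : (-1:ℤ) ≠ (1)) (mi (-1)) (Or.inr (Or.inr (Or.inr rfl)))).2.2.2)
      have s_mim1_x1 : χ 1 * (mi (-1)) = mi (-1) * (χ 1) :=
        ((h.letter_pack (by norm_num : (-1:ℤ) ≠ (1)) (mi (-1)) (Or.inr (Or.inr (Or.inr rfl)))).1).symm.eq
      have l_mim1_x1 : ∀ z : A, χ 1 * (mi (-1) * z) = mi (-1) * (χ 1 * z) :=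
        lift_comm ((h.letter_pack (by norm_num : (-1:ℤ) ≠ (1)) (mi (-1)) (Or.inr (Or.inr (Or.inr rfl)))).1)
      have s_mim1_D1 : D 1 * (mi (-1)) = mi (-1) * (D 1) :=
        ((h.letter_pack (by norm_num : (-1:ℤ) ≠ (1)) (mi (-1)) (Or.inr (Or.inr (Or.inr rfl)))).2.1).symm.eq
      have l_mim1_D1 : ∀ z : A, D 1 * (mi (-1) * z) = mi (-1) * (D 1 * z) :=
        lift_comm ((h.letter_pack (by norm_num : (-1:ℤ) ≠ (1)) (mi (-1)) (Or.inr (Or.inr (Or.inr rfl)))).2.1)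
      have s_xm1_mi1 : mi 1 * (χ (-1)) = χ (-1) * (mi 1) :=
        ((h.letter_pack (by norm_num : (-1:ℤ) ≠ (1)) (χ (-1)) (Or.inl rfl)).2.2.2).symm.eq
      have l_xm1_mi1 : ∀ z : A, mi 1 * (χ (-1) * z) = χ (-1) * (mi 1 * z) :=
        lift_comm ((h.letter_pack (by norm_num : (-1:ℤ) ≠ (1)) (χ (-1)) (Or.inl rfl)).2.2.2)
      have s_xm1_x1 : χ 1 * (χ (-1)) = χ (-1) * (χ 1) :=
        ((h.letter_pack (by norm_num : (-1:ℤ) ≠ (1)) (χ (-1)) (Or.inl rfl)).1).symm.eq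
      have l_xm1_x1 : ∀ z : A, χ 1 * (χ (-1) * z) = χ (-1) * (χ 1 * z) :=
        lift_comm ((h.letter_pack (by norm_num : (-1:ℤ) ≠ (1)) (χ (-1)) (Or.inl rfl)).1)
      have s_xm1_D1 : D 1 * (χ (-1)) = χ (-1) * (D 1) :=
        ((h.letter_pack (by norm_num : (-1:ℤ) ≠ (1)) (χ (-1)) (Or.inl rfl)).2.1).symm.eq
      have l_xm1_D1 : ∀ z : A, D 1 * (χ (-1) * z) = χ (-1) * (D 1 * z) :=
        lift_comm ((h.letter_pack (by norm_num : (-1:ℤ) ≠ (1)) (χ (-1)) (Or.inl rfl)).2.1)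
      have s_Dm1_mi1 : mi 1 * (D (-1)) = D (-1) * (mi 1) :=
        ((h.letter_pack (by norm_num : (-1:ℤ) ≠ (1)) (D (-1)) (Or.inr (Or.inl rfl))).2.2.2).symm.eq
      have l_Dm1_mi1 : ∀ z : A, mi 1 * (D (-1) * z) = D (-1) * (mi 1 * z) :=
        lift_comm ((h.letter_pack (by norm_num : (-1:ℤ) ≠ (1)) (D (-1)) (Or.inr (Or.inl rfl))).2.2.2)
      have s_Dm1_x1 : χ 1 * (D (-1)) = D (-1) * (χ 1) :=
        ((h.letter_pack (by norm_num : (-1:ℤ) ≠ (1)) (D (-1)) (Or.inr (Or.inl rfl))).1).symm.eq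
      have l_Dm1_x1 : ∀ z : A, χ 1 * (D (-1) * z) = D (-1) * (χ 1 * z) :=
        lift_comm ((h.letter_pack (by norm_num : (-1:ℤ) ≠ (1)) (D (-1)) (Or.inr (Or.inl rfl))).1)
      have s_Dm1_D1 : D 1 * (D (-1)) = D (-1) * (D 1) :=
        ((h.letter_pack (by norm_num : (-1:ℤ) ≠ (1)) (D (-1)) (Or.inr (Or.inl rfl))).2.1).symm.eq
      have l_Dm1_D1 : ∀ z : A, D 1 * (D (-1) * z) = D (-1) * (D 1 * z) :=
        lift_comm ((h.letter_pack (by norm_num : (-1:ℤ) ≠ (1)) (D (-1)) (Or.inr (Or.inl rfl))).2.1)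
      rw [eLm2m1, eLm21, hmu1, hmum1]
      simp only [mul_add, add_mul, mul_sub, sub_mul, smul_add, smul_sub, smul_mul_assoc,
        mul_smul_comm, smul_smul, mul_assoc, mul_one, one_mul,
        q_D2_mi2, ql_D2_mi2, q_xm2_mm2, ql_xm2_mm2, q_D1_x1, ql_D1_x1, q_Dm1_xm1, ql_Dm1_xm1, q_xm1_mim1, ql_xm1_mim1, q_Dm1_mim1, ql_Dm1_mim1, q_x1_mi1, ql_x1_mi1, q_D1_mi1, ql_D1_mi1,
        s_mi2_mm2, l_mi2_mm2, s_mi2_xm2, l_mi2_xm2, s_mi2_mim1, l_mi2_mim1, s_mi2_xm1, l_mi2_xm1, s_mi2_Dm1, l_mi2_Dm1, s_mi2_mi1, l_mi2_mi1, s_mi2_x1, l_mi2_x1, s_mi2_D1, l_mi2_D1, s_D2_mm2, l_D2_mm2, s_D2_xm2, l_D2_xm2, s_D2_mim1, l_D2_mim1, s_D2_xm1, l_D2_xm1, s_D2_Dm1, l_D2_Dm1, s_D2_mi1, l_D2_mi1, s_D2_x1, l_D2_x1, s_D2_D1, l_D2_D1, s_mm2_mim1, l_mm2_mim1, s_mm2_xm1,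 l_mm2_xm1, s_mm2_Dm1, l_mm2_Dm1, s_mm2_mi1, l_mm2_mi1, s_mm2_x1, l_mm2_x1, s_mm2_D1, l_mm2_D1, s_xm2_mim1, l_xm2_mim1, s_xm2_xm1, l_xm2_xm1, s_xm2_Dm1, l_xm2_Dm1, s_xm2_mi1, l_xm2_mi1, s_xm2_x1, l_xm2_x1, s_xm2_D1, l_xm2_D1, s_mim1_mi1, l_mim1_mi1, s_mim1_x1, l_mim1_x1, s_mim1_D1, l_mim1_D1, s_xm1_mi1, l_xm1_mi1, s_xm1_x1, l_xm1_x1, s_xm1_D1, l_xm1_D1, s_Dm1_mi1, l_Dm1_mi1, s_Dm1_x1, l_Dm1_x1, s_Dm1_D1, l_Dm1_D1]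
      match_scalars <;> (simp only [← zpow_natCast, ← zpow_neg, ← zpow_add₀ hp]; try norm_num; try ring)
end
end

section
/- Let J := Σ_{j∈I_N} A𝒟_j be the left ideal of A generated by the derivatives 𝒟_j, and fix an integer k ≥ 0. Then (χ^n)^k is annihilated modulo J by all positive simple-root generators, and it is a weight vector of weight (0,…,0,k) for the Cartan generators modulo J; explicitly: E · (χ^n)^k ∈ J for every E among L^{1−m,m} (2 ≤ m ≤ n for N odd, 3 ≤ m ≤ n for N even), L^{01} (N odd), and L^{12}, L^{−1,2} (N even); k^n (χ^n)^k − q^{2k} (χ^n)^k ∈ J; and k^i (χ^n)^k − (χ^n)^k ∈ J for 1 ≤ i < n. -/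
noncomputable section

open Finset

variable {K : Type*} [Field K] {A : Type*} [Ring A] [Algebra K A]

/-- `(χ^n)^k` is, modulo the left ideal `J` generated by the derivatives,
annihilated by all positive simple-root generators and is a weight vector of weight
`(0,…,0,k)` for the Cartan generators. -/
theorem highest_weight_decoupled [CharZero K] (N : ℕ) (hN : 3 ≤ N) (p : K) (hp : p ≠ 0)
    (hpu : ∀ kk : ℕ, kk ≠ 0 → p ^ kk ≠ 1)
    (χ D m mi : ℤ → A) (h : Decoupled N p χ D m mi) (k : ℕ) :
    (∀ mm : ℤ, (if N % 2 = 1 then 2 else 3) ≤ mm → mm ≤ (N / 2 : ℕ) →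
      Lpos N p χ D m mi mm * χ ((N / 2 : ℕ) : ℤ) ^ k ∈
        Submodule.span A {a : A | ∃ j ∈ idx N, a = D j}) ∧
    (N % 2 = 1 →
      L01 N p χ D m mi * χ ((N / 2 : ℕ) : ℤ) ^ k ∈
        Submodule.span A {a : A | ∃ j ∈ idx N, a = D j}) ∧
    (N % 2 = 0 →
      L12 N p χ D m mi * χ ((N / 2 : ℕ) : ℤ) ^ k ∈
        Submodule.span A {a : A | ∃ j ∈ idx N, a = D j} ∧
      Lm12 N p χ D m mi * χ ((N / 2 : ℕ) : ℤ) ^ k ∈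
        Submodule.span A {a : A | ∃ j ∈ idx N, a = D j}) ∧
    (kgen m mi ((N / 2 : ℕ) : ℤ) * χ ((N / 2 : ℕ) : ℤ) ^ k -
        (p ^ (4 * k)) • χ ((N / 2 : ℕ) : ℤ) ^ k ∈
      Submodule.span A {a : A | ∃ j ∈ idx N, a = D j}) ∧
    (∀ i : ℤ, 1 ≤ i → i < (N / 2 : ℕ) →
      kgen m mi i * χ ((N / 2 : ℕ) : ℤ) ^ k - χ ((N / 2 : ℕ) : ℤ) ^ k ∈
        Submodule.span A {a : A | ∃ j ∈ idx N, a = D j}) := by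
  set n : ℤ := ((N / 2 : ℕ) : ℤ) with hn
  set J : Submodule A A := Submodule.span A {a : A | ∃ j ∈ idx N, a = D j} with hJ
  have hn1 : (1:ℤ) ≤ n := by omega
  have memD : ∀ j : ℤ, j ∈ idx N → D j ∈ J := fun j hj =>
    Submodule.subset_span ⟨j, hj, rfl⟩
  have mulJ : ∀ (a : A) {x : A}, x ∈ J → a * x ∈ J := fun a x hx => by
    simpa [smul_eq_mul] using J.smul_mem a hx
  have ksmulJ : ∀ (c : K) {x : A}, x ∈ J → c • x ∈ J := fun c x hx => by
    rw [Algebra.smul_def]; exact mulJ _ hx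
  have hidx : ∀ j : ℤ, -n ≤ j → j ≤ n → (j ≠ 0 ∨ N % 2 = 1) → j ∈ idx N := by
    intro j h1 h2 h3
    simp only [idx, Finset.mem_filter, Finset.mem_Icc]
    exact ⟨⟨by omega, by omega⟩, h3⟩
  -- commutation of a with powers of χ n
  have hpow : ∀ (a : A) (c : K), a * χ n = c • (χ n * a) →
      ∀ kk : ℕ, a * χ n ^ kk = c ^ kk • (χ n ^ kk * a) := by
    intro a c hac kk
    induction kk with
    | zero => simp
    | succ kk ih =>
      calc a * χ n ^ (kk+1) = (a * χ n ^ kk) * χ n := by rw [pow_succ, mul_assoc]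
        _ = (c ^ kk • (χ n ^ kk * a)) * χ n := by rw [ih]
        _ = c ^ kk • (χ n ^ kk * (a * χ n)) := by rw [smul_mul_assoc, mul_assoc]
        _ = c ^ kk • (χ n ^ kk * (c • (χ n * a))) := by rw [hac]
        _ = (c ^ kk * c) • (χ n ^ kk * (χ n * a)) := by rw [mul_smul_comm, smul_smul]
        _ = c ^ (kk+1) • (χ n ^ (kk+1) * a) := by rw [← mul_assoc, ← pow_succ, ← pow_succ]
  have hpow2 : ∀ (a : A) (c : K), a * χ n = c • (χ n * a) →
      a ^ 2 * χ n ^ k = ((c ^ k) ^ 2) • (χ n ^ k * a ^ 2) := by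
    intro a c hac
    calc a ^ 2 * χ n ^ k = a * (a * χ n ^ k) := by rw [sq, mul_assoc]
      _ = a * (c ^ k • (χ n ^ k * a)) := by rw [hpow a c hac k]
      _ = c ^ k • ((a * χ n ^ k) * a) := by rw [mul_smul_comm, mul_assoc]
      _ = c ^ k • ((c ^ k • (χ n ^ k * a)) * a) := by rw [hpow a c hac k]
      _ = (c ^ k * c ^ k) • (χ n ^ k * (a * a)) := by
          rw [smul_mul_assoc, smul_smul, mul_assoc]
      _ = ((c ^ k) ^ 2) • (χ n ^ k * a ^ 2) := by rw [← sq, ← sq]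
  have hswap : ∀ j : ℤ, j ≠ n → D j * χ n ^ k = χ n ^ k * D j := by
    intro j hj
    have := hpow (D j) 1 (by rw [one_smul]; exact (h.comm_xD n j (Ne.symm hj)).symm) k
    simpa using this
  -- commutation of mi with χ and D
  have hmix : ∀ i j : ℤ, i ≠ j → mi i * χ j = χ j * mi i := by
    intro i j hij
    have h1 : m i * χ j = χ j * m i := by simpa [hij] using h.m_x i j
    have h2 := (h.m_inv i).1
    have h3 := (h.m_inv i).2
    calc mi i * χ j = mi i * (χ j * (m i * mi i)) := by rw [h2, mul_one]
      _ = mi i * (m i * χ j) * mi i := by rw [← mul_assoc (χ j), ← h1, ← mul_assoc]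
      _ = χ j * mi i := by rw [← mul_assoc, h3, one_mul]
  have hDmi : ∀ i j : ℤ, D j * mi i = (if i = j then (p ^ (-2:ℤ) : K) else 1) • (mi i * D j) := by
    intro i j
    have h2 := (h.m_inv i).1
    have h3 := (h.m_inv i).2
    calc D j * mi i = (mi i * m i) * (D j * mi i) := by rw [h3, one_mul]
      _ = mi i * ((m i * D j) * mi i) := by rw [mul_assoc, ← mul_assoc (m i)]
      _ = mi i * (((if i = j then (p ^ (-2:ℤ) : K) else 1) • (D j * m i)) * mi i) := by
          rw [h.m_D i j]
      _ = (if i = j then (p ^ (-2:ℤ) : K) else 1) • (mi i * (D j * (m i * mi i))) := by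
          rw [smul_mul_assoc, mul_smul_comm, mul_assoc]
      _ = (if i = j then (p ^ (-2:ℤ) : K) else 1) • (mi i * D j) := by rw [h2, mul_one]
  have hDmi2 : ∀ i j : ℤ, D j * mi i ^ 2 =
      ((if i = j then (p ^ (-2:ℤ) : K) else 1) ^ 2) • (mi i ^ 2 * D j) := by
    intro i j
    set t : K := if i = j then (p ^ (-2:ℤ) : K) else 1 with ht
    calc D j * mi i ^ 2 = (D j * mi i) * mi i := by rw [sq, ← mul_assoc]
      _ = (t • (mi i * D j)) * mi i := by rw [hDmi i j]
      _ = t • (mi i * (D j * mi i)) := by rw [smul_mul_assoc, mul_assoc]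
      _ = t • (mi i * (t • (mi i * D j))) := by rw [hDmi i j]
      _ = (t * t) • (mi i * (mi i * D j)) := by rw [mul_smul_comm, smul_smul]
      _ = (t ^ 2) • (mi i ^ 2 * D j) := by rw [← sq, sq (mi i), mul_assoc]
  have hsqinv : ∀ i : ℤ, m i ^ 2 * mi i ^ 2 = 1 ∧ mi i ^ 2 * m i ^ 2 = 1 := by
    intro i
    have h1 := (h.m_inv i).1
    have h2 := (h.m_inv i).2
    constructor
    · rw [sq, sq, mul_assoc, ← mul_assoc (m i) (mi i), h1, one_mul, h1]
    · rw [sq, sq, mul_assoc, ← mul_assoc (mi i) (m i), h2, one_mul, h2]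
  -- the key Cartan fact
  have kgenJ : ∀ i : ℤ, 1 ≤ i → i ≤ n → kgen m mi i - 1 ∈ J := by
    intro i h1 h2
    have hiidx : i ∈ idx N := hidx i (by omega) (by omega) (Or.inl (by omega))
    have hmii : -i ∈ idx N := hidx (-i) (by omega) (by omega) (Or.inl (by omega))
    have hmsq : m i ^ 2 = 1 + ((p ^ 4 - 1 : K)) • (χ i * D i) :=
      h.m_sq_pos i hiidx (Or.inl (by omega))
    have hmi2 : mi (-i) ^ 2 - 1 ∈ J := by
      by_cases hc : N % 2 = 0 ∧ -i = -1
      · have hpos := h.m_sq_pos (-i) hmii (Or.inr hc)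
        have e1 : mi (-i) ^ 2 - 1 = (1 - m (-i) ^ 2) * mi (-i) ^ 2 := by
          rw [sub_mul, one_mul, (hsqinv (-i)).1]
        rw [e1, hpos]
        have e2 : (1 : A) - (1 + ((p ^ 4 - 1 : K)) • (χ (-i) * D (-i))) =
            -((p ^ 4 - 1 : K) • (χ (-i) * D (-i))) := by abel
        rw [e2, neg_mul, smul_mul_assoc, mul_assoc, hDmi2 (-i) (-i)]
        refine J.neg_mem (ksmulJ _ ?_)
        rw [mul_smul_comm]
        exact ksmulJ _ (mulJ _ (mulJ _ (memD _ hmii)))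
      · have hneg := h.m_sq_neg (-i) hmii (by omega) hc
        have e : mi (-i) ^ 2 = 1 + ((p ^ (-4:ℤ) - 1 : K)) • (χ (-i) * D (-i)) := by
          calc mi (-i) ^ 2
              = mi (-i) ^ 2 * (m (-i) ^ 2 * (1 + ((p ^ (-4:ℤ) - 1 : K)) • (χ (-i) * D (-i)))) := by
                rw [hneg.1, mul_one]
            _ = (mi (-i) ^ 2 * m (-i) ^ 2) * (1 + ((p ^ (-4:ℤ) - 1 : K)) • (χ (-i) * D (-i))) := by
                rw [mul_assoc]
            _ = 1 + ((p ^ (-4:ℤ) - 1 : K)) • (χ (-i) * D (-i)) := by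
                rw [(hsqinv (-i)).2, one_mul]
        rw [e, add_sub_cancel_left]
        exact ksmulJ _ (mulJ _ (memD _ hmii))
    have hDmc : D i * mi (-i) ^ 2 = mi (-i) ^ 2 * D i := by
      have := hDmi2 (-i) i
      rw [if_neg (by omega)] at this
      simpa using this
    have key : kgen m mi i - 1 =
        (mi (-i) ^ 2 - 1) + ((p ^ 4 - 1 : K)) • (χ i * (mi (-i) ^ 2 * D i)) := by
      show m i ^ 2 * mi (-i) ^ 2 - 1 = _
      rw [hmsq, add_mul, one_mul, smul_mul_assoc, mul_assoc, hDmc]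
      abel
    rw [key]
    exact J.add_mem hmi2 (ksmulJ _ (mulJ _ (mulJ _ (memD _ hiidx))))
  have hkgen_comm : ∀ i : ℤ, -i ≠ n → kgen m mi i * χ n ^ k =
      (((if i = n then (p ^ 2 : K) else 1) ^ k) ^ 2) • (χ n ^ k * kgen m mi i) := by
    intro i hne
    have hmix' : mi (-i) * χ n = (1:K) • (χ n * mi (-i)) := by
      rw [one_smul]; exact hmix (-i) n hne
    calc kgen m mi i * χ n ^ k = m i ^ 2 * (mi (-i) ^ 2 * χ n ^ k) := by
          rw [kgen, mul_assoc]
      _ = m i ^ 2 * (((1:K) ^ k) ^ 2 • (χ n ^ k * mi (-i) ^ 2)) := by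
          rw [hpow2 (mi (-i)) 1 hmix']
      _ = (m i ^ 2 * χ n ^ k) * mi (-i) ^ 2 := by
          rw [one_pow, one_pow, one_smul, mul_assoc]
      _ = (((if i = n then (p ^ 2 : K) else 1) ^ k) ^ 2 • (χ n ^ k * m i ^ 2)) * mi (-i) ^ 2 := by
          rw [hpow2 (m i) _ (h.m_x i n)]
      _ = (((if i = n then (p ^ 2 : K) else 1) ^ k) ^ 2) • (χ n ^ k * kgen m mi i) := by
          rw [smul_mul_assoc, mul_assoc, kgen]
  refine ⟨?_, ?_, ?_, ?_, ?_⟩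
  · -- Lpos
    intro mm hge hle
    have h2mm : 2 ≤ mm := by by_cases hpar : N % 2 = 1 <;> simp [hpar] at hge <;> omega
    have hj1 : -mm ∈ idx N := hidx _ (by omega) (by omega) (Or.inl (by omega))
    have hj2 : -(1 - mm) ∈ idx N := hidx _ (by omega) (by omega) (Or.inl (by omega))
    have hs1 := hswap (-mm) (by omega)
    have hs2 := hswap (-(1 - mm)) (by omega)
    simp only [Lpos, Du, mul_sub, sub_mul, smul_mul_assoc, mul_smul_comm, smul_smul, mul_assoc]
    rw [hs1, hs2]
    refine J.sub_mem ?_ ?_ <;>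
      repeat first
        | exact memD _ hj1
        | exact memD _ hj2
        | apply ksmulJ
        | apply mulJ
  · -- L01
    intro hodd
    have hj1 : (-1 : ℤ) ∈ idx N := hidx _ (by omega) (by omega) (Or.inl (by omega))
    have hj0 : (0 : ℤ) ∈ idx N := hidx _ (by omega) (by omega) (Or.inr hodd)
    have hs1 := hswap (-1) (by omega)
    have hs0 := hswap 0 (by omega)
    simp only [L01, Du, neg_zero, mul_sub, sub_mul, smul_mul_assoc, mul_smul_comm, smul_smul,
      mul_assoc]
    rw [hs1, hs0]
    refine J.sub_mem ?_ ?_ <;>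
      repeat first
        | exact memD _ hj1
        | exact memD _ hj0
        | apply ksmulJ
        | apply mulJ
  · -- L12 and Lm12
    intro heven
    have hn2 : (2:ℤ) ≤ n := by omega
    have hj2 : (-2 : ℤ) ∈ idx N := hidx _ (by omega) (by omega) (Or.inl (by omega))
    have hj1 : (-1 : ℤ) ∈ idx N := hidx _ (by omega) (by omega) (Or.inl (by omega))
    have hjp1 : (1 : ℤ) ∈ idx N := hidx _ (by omega) (by omega) (Or.inl (by omega))
    constructor
    · have hs2 := hswap (-2) (by omega)
      have hs1 := hswap (-1) (by omega)
      simp only [L12, Du, mul_sub, sub_mul, smul_mul_assoc, mul_smul_comm, smul_smul, mul_assoc]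
      rw [hs2, hs1]
      refine J.sub_mem ?_ ?_ <;>
        repeat first
          | exact memD _ hj2
          | exact memD _ hj1
          | apply ksmulJ
          | apply mulJ
    · have hs2 := hswap (-2) (by omega)
      have hs1 := hswap 1 (by omega)
      simp only [Lm12, Du, neg_neg, mul_sub, sub_mul, smul_mul_assoc, mul_smul_comm, smul_smul,
        mul_assoc]
      rw [hs2, hs1]
      refine J.sub_mem ?_ ?_ <;>
        repeat first
          | exact memD _ hj2
          | exact memD _ hjp1
          | apply ksmulJ
          | apply mulJ
  · -- weight at n
    have hc := hkgen_comm n (by omega)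
    rw [if_pos rfl] at hc
    have key : kgen m mi n * χ n ^ k - (p ^ (4 * k)) • χ n ^ k =
        (((p ^ 2 : K) ^ k) ^ 2) • (χ n ^ k * (kgen m mi n - 1)) := by
      have hsc : (p ^ (4 * k) : K) = ((p ^ 2) ^ k) ^ 2 := by ring
      rw [hc, hsc, mul_sub, mul_one, smul_sub]
    rw [key]
    exact ksmulJ _ (mulJ _ (kgenJ n hn1 le_rfl))
  · -- weight at i < n
    intro i h1i hilt
    have hc := hkgen_comm i (by omega)
    rw [if_neg (by omega), one_pow, one_pow, one_smul] at hc
    have key : kgen m mi i * χ n ^ k - χ n ^ k = χ n ^ k * (kgen m mi i - 1) := by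
      rw [hc, mul_sub, mul_one]
    rw [key]
    exact mulJ _ (kgenJ i h1i (by omega))
end
end
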